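/- arXiv:1704.01995 — 13 statements merged into one kernel-verified Lean document; each statement's English description precedes it below -/
import Mathlib

section
/- Under statistical QoS constraints with a constant-rate source, the minimum energy per bit for confidential message transmission to receiver 1 satisfies lim_{snr→0⁺} (δ·P(z1 ≥ z2)·snr)/C_E1(snr) = P(z1 ≥ z2)·log_e 2 / E[(z1 − z2)·1{z1 ≥ z2}]. -/
/-!
As `snr → 0⁺`, `R1(snr)/snr → δ (z1 - z2)⁺ / log 2` pointwise, and
`0 ≤ R1(snr) ≤ δ snr (z1 - z2)⁺ / log 2`. By dominated convergence `g1`, which equals `1` at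
`snr = 0`, has right derivative `-θ δ E[(z1 - z2)⁺] / log 2` there. Since `log g ≈ g - 1` near
`g = 1`, `C_E1(snr)/snr → δ E[(z1 - z2)⁺] / log 2`, which is positive because `P(z1 > z2) > 0`,
and the claim follows by taking reciprocals.
-/

open MeasureTheory Filter Topology Real

theorem HasDerivAt.tendsto_comp_sub_div {f : ℝ → ℝ} {f' a L : ℝ} (hf : HasDerivAt f f' a)
    {l : Filter ℝ} (hl : l ≤ 𝓝[≠] 0) {u : ℝ → ℝ}
    (h : Tendsto (fun s => (u s - a) / s) l (𝓝 L)) :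
    Tendsto (fun s => (f (u s) - f a) / s) l (𝓝 (f' * L)) := by
  have hu : Tendsto u l (𝓝 a) := by
    have hs : Tendsto (fun s : ℝ => s) l (𝓝 0) :=
      tendsto_id.mono_left (hl.trans nhdsWithin_le_nhds)
    have := tendsto_const_nhds (x := a) |>.add (hs.mul h)
    rw [zero_mul, add_zero] at this
    refine this.congr' ?_
    filter_upwards [hl self_mem_nhdsWithin] with s (hs0 : s ≠ 0)
    field_simp
    ring
  have hslope : Tendsto (fun s => dslope f a (u s)) l (𝓝 f') := by
    rw [← hf.deriv, ← dslope_same]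
    exact (continuousAt_dslope_same.2 hf.differentiableAt).tendsto.comp hu
  refine (hslope.mul h).congr fun s => ?_
  rw [← sub_smul_dslope f a (u s), smul_eq_mul]
  ring

theorem tendsto_integral_exp_neg_mul_sub_one_div {Ω : Type*} [MeasurableSpace Ω] {μ : Measure Ω}
    [IsProbabilityMeasure μ] {X : ℝ → Ω → ℝ} {Y : Ω → ℝ} {θ C : ℝ} (hθ : 0 ≤ θ)
    (hXm : ∀ s, AEStronglyMeasurable (X s) μ)
    (hX0 : ∀ s > 0, ∀ ω, 0 ≤ X s ω) (hXC : ∀ s > 0, ∀ ω, X s ω ≤ C * s)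
    (hY : ∀ ω, Tendsto (fun s => X s ω / s) (𝓝[>] 0) (𝓝 (Y ω))) :
    Tendsto (fun s => (∫ ω, exp (-θ * X s ω) ∂μ - 1) / s) (𝓝[>] 0)
      (𝓝 (-θ * ∫ ω, Y ω ∂μ)) := by
  have hexp_le_one : ∀ s > 0, ∀ ω, exp (-θ * X s ω) ≤ 1 := fun s hs ω => by
    have := mul_nonneg hθ (hX0 s hs ω)
    rw [exp_le_one_iff]; linarith
  have hbound : ∀ s > 0, ∀ ω, ‖(exp (-θ * X s ω) - 1) / s‖ ≤ θ * C := fun s hs ω => by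
    have h1 := add_one_le_exp (-θ * X s ω)
    have h2 := mul_le_mul_of_nonneg_left (hXC s hs ω) hθ
    rw [norm_div, Real.norm_of_nonpos (by linarith [hexp_le_one s hs ω]),
      Real.norm_of_nonneg hs.le, div_le_iff₀ hs]
    linarith
  have hlim : ∀ ω, Tendsto (fun s => (exp (-θ * X s ω) - 1) / s) (𝓝[>] 0) (𝓝 (-θ * Y ω)) :=
    fun ω => by
      have hf : HasDerivAt (fun x => exp (-θ * x)) (-θ) 0 := by
        simpa using ((hasDerivAt_id (0 : ℝ)).const_mul (-θ)).exp
      simpa using hf.tendsto_comp_sub_div (u := fun s => X s ω) (nhdsGT_le_nhdsNE 0)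
        (by simpa only [sub_zero] using hY ω)
  have hdct := tendsto_integral_filter_of_dominated_convergence (μ := μ) (l := 𝓝[>] 0)
    (fun _ => θ * C)
    (Eventually.of_forall fun s => by have := hXm s; fun_prop)
    (eventually_mem_nhdsWithin.mono fun s hs => Eventually.of_forall (hbound s hs))
    (integrable_const _) (Eventually.of_forall hlim)
  rw [integral_const_mul] at hdct
  refine hdct.congr' (eventually_mem_nhdsWithin.mono fun s hs => ?_)
  have hint : Integrable (fun ω => exp (-θ * X s ω)) μ :=
    Integrable.mono' (integrable_const 1) (by have := hXm s; fun_prop)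
      (Eventually.of_forall fun ω => by
        rw [Real.norm_of_nonneg (exp_pos _).le]; exact hexp_le_one s hs ω)
  rw [integral_div, integral_sub hint (integrable_const 1), integral_const, probReal_univ,
    one_smul]

noncomputable def confidentialRate (δ snr a b : ℝ) : ℝ :=
  if b ≤ a then logb 2 ((1 + δ * snr * a) / (1 + δ * snr * b)) else 0

section confidentialRate

variable {δ snr a b : ℝ}

theorem confidentialRate_nonneg (hδ : 0 ≤ δ) (hsnr : 0 ≤ snr) (hb : 0 ≤ b) :
    0 ≤ confidentialRate δ snr a b := by
  unfold confidentialRate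
  split_ifs with hba
  · have : δ * snr * b ≤ δ * snr * a := by gcongr
    exact logb_nonneg one_lt_two ((one_le_div (by positivity)).2 (by linarith))
  · exact le_rfl

theorem confidentialRate_le (hδ : 0 ≤ δ) (hsnr : 0 ≤ snr) (hb : 0 ≤ b) :
    confidentialRate δ snr a b ≤ δ * snr * (if b ≤ a then a - b else 0) / log 2 := by
  unfold confidentialRate
  split_ifs with hba
  · have hy : 0 ≤ δ * snr * b := by positivity
    have hxy : δ * snr * b ≤ δ * snr * a := by gcongr
    rw [logb]
    gcongr
    calc log ((1 + δ * snr * a) / (1 + δ * snr * b))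
        ≤ (1 + δ * snr * a) / (1 + δ * snr * b) - 1 :=
          log_le_sub_one_of_pos (div_pos (by linarith) (by linarith))
      _ = (δ * snr * a - δ * snr * b) / (1 + δ * snr * b) := by field_simp; ring
      _ ≤ δ * snr * a - δ * snr * b := div_le_self (by linarith) (by linarith)
      _ = δ * snr * (a - b) := by ring
  · simp

theorem tendsto_confidentialRate_div (δ a b : ℝ) :
    Tendsto (fun snr => confidentialRate δ snr a b / snr) (𝓝[≠] 0)
      (𝓝 (δ * (if b ≤ a then a - b else 0) / log 2)) := by
  unfold confidentialRate
  split_ifs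
  · have hlin : ∀ z : ℝ, HasDerivAt (fun s => 1 + δ * s * z) (δ * z) 0 := fun z => by
      simpa [mul_comm, mul_left_comm] using
        ((hasDerivAt_id (0 : ℝ)).const_mul (δ * z)).const_add 1
    have hderiv := (((hlin a).div (hlin b) (by simp)).log (by simp)).div_const (log 2)
    have := hasDerivAt_iff_tendsto_slope.1 hderiv
    convert this using 2 with s
    · simp [slope_def_field, logb, div_right_comm]
    · simp; ring
  · simp

theorem Measurable.confidentialRate {Ω : Type*} [MeasurableSpace Ω] {f g : Ω → ℝ}
    (hf : Measurable f) (hg : Measurable g) (δ snr : ℝ) :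
    Measurable fun ω => confidentialRate δ snr (f ω) (g ω) := by
  unfold _root_.confidentialRate
  exact Measurable.ite (measurableSet_le hg hf) (by simp only [logb]; fun_prop) measurable_const

end confidentialRate

theorem tendsto_integral_exp_neg_mul_confidentialRate_sub_one_div {Ω : Type*}
    [MeasurableSpace Ω] {μ : Measure Ω} [IsProbabilityMeasure μ] {z1 z2 : Ω → ℝ}
    (hz1m : Measurable z1) (hz2m : Measurable z2) (hz2nn : ∀ ω, 0 ≤ z2 ω) {M : ℝ}
    (hM : ∀ ω, (if z2 ω ≤ z1 ω then z1 ω - z2 ω else 0) ≤ M) {θ δ : ℝ} (hθ : 0 ≤ θ)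
    (hδ : 0 ≤ δ) :
    Tendsto (fun s => (∫ ω, exp (-θ * confidentialRate δ s (z1 ω) (z2 ω)) ∂μ - 1) / s) (𝓝[>] 0)
      (𝓝 (-θ * (δ * (∫ ω, (if z2 ω ≤ z1 ω then z1 ω - z2 ω else 0) ∂μ) / log 2))) := by
  have hbound : ∀ s > 0, ∀ ω, confidentialRate δ s (z1 ω) (z2 ω) ≤ δ * M / log 2 * s :=
    fun s hs ω => (confidentialRate_le hδ hs.le (hz2nn ω)).trans <| by
      rw [div_mul_eq_mul_div, mul_right_comm]
      gcongr
      exact hM ω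
  have := tendsto_integral_exp_neg_mul_sub_one_div (μ := μ) hθ
    (fun s => (hz1m.confidentialRate hz2m δ s).aestronglyMeasurable)
    (fun s hs ω => confidentialRate_nonneg hδ hs.le (hz2nn ω)) hbound
    (fun ω => (tendsto_confidentialRate_div δ _ _).mono_left (nhdsGT_le_nhdsNE 0))
  rwa [integral_div, integral_const_mul] at this

theorem ite_sub_nonneg (a b : ℝ) : 0 ≤ if b ≤ a then a - b else 0 := by
  split_ifs with h <;> linarith

theorem integral_ite_sub_pos {Ω : Type*} [MeasurableSpace Ω] {μ : Measure Ω} {f g : Ω → ℝ}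
    (hint : Integrable (fun ω => if g ω ≤ f ω then f ω - g ω else 0) μ)
    (hpos : μ {ω | g ω < f ω} ≠ 0) :
    0 < ∫ ω, (if g ω ≤ f ω then f ω - g ω else 0) ∂μ := by
  rw [integral_pos_iff_support_of_nonneg (fun ω => ite_sub_nonneg (f ω) (g ω)) hint]
  refine (pos_iff_ne_zero.2 hpos).trans_le (measure_mono fun ω (hω : g ω < f ω) => ?_)
  simp [hω.le, sub_ne_zero.2 hω.ne']

theorem minimum_energy_per_bit_confidential_constant_rate_general
    {Ω : Type*} [MeasurableSpace Ω] (μ : Measure Ω) [IsProbabilityMeasure μ]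
    (z1 z2 : Ω → ℝ) (hz1m : Measurable z1) (hz2m : Measurable z2)
    (hz2nn : ∀ ω, 0 ≤ z2 ω)
    (M : ℝ) (hz1b : ∀ ω, z1 ω ≤ M)
    (hpos : 0 < (μ {ω | z2 ω < z1 ω}).toReal)
    (θ δ : ℝ) (hθ : 0 < θ) (hδ0 : 0 < δ)
    (R1 : ℝ → Ω → ℝ)
    (hR1 : ∀ snr ω, R1 snr ω =
      if z2 ω ≤ z1 ω then
        Real.logb 2 ((1 + δ * snr * z1 ω) / (1 + δ * snr * z2 ω)) else 0)
    (g1 : ℝ → ℝ) (hg1 : ∀ snr, g1 snr = ∫ ω, Real.exp (-θ * R1 snr ω) ∂μ)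
    (CE1 : ℝ → ℝ) (hCE1 : ∀ snr, CE1 snr = -(1 / θ) * Real.log (g1 snr)) :
    Filter.Tendsto
      (fun snr => (δ * (μ {ω | z2 ω ≤ z1 ω}).toReal * snr) / CE1 snr)
      (nhdsWithin 0 (Set.Ioi 0))
      (nhds ((μ {ω | z2 ω ≤ z1 ω}).toReal * Real.log 2 /
        ∫ ω, (if z2 ω ≤ z1 ω then z1 ω - z2 ω else 0) ∂μ)) := by
  set I := ∫ ω, (if z2 ω ≤ z1 ω then z1 ω - z2 ω else 0) ∂μ
  have hμ : μ {ω | z2 ω < z1 ω} ≠ 0 := fun h => by simp [h] at hpos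
  have hgain_le : ∀ ω, (if z2 ω ≤ z1 ω then z1 ω - z2 ω else 0) ≤ M := by
    obtain ⟨ω₀, hω₀ : z2 ω₀ < z1 ω₀⟩ := nonempty_of_measure_ne_zero hμ
    intro ω
    split_ifs
    · linarith [hz1b ω, hz2nn ω]
    · linarith [hz1b ω₀, hz2nn ω₀]
  have hI : 0 < I := by
    refine integral_ite_sub_pos (Integrable.of_bound ?_ M ?_) hμ
    · exact (Measurable.ite (measurableSet_le hz2m hz1m) (hz1m.sub hz2m)
        measurable_const).aestronglyMeasurable
    · exact .of_forall fun ω => (norm_of_nonneg (ite_sub_nonneg _ _)).trans_le (hgain_le ω)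
  have hg1_slope : Tendsto (fun s => (g1 s - 1) / s) (𝓝[>] 0) (𝓝 (-θ * (δ * I / log 2))) := by
    simpa only [hg1, hR1, confidentialRate] using
      tendsto_integral_exp_neg_mul_confidentialRate_sub_one_div (μ := μ) hz1m hz2m hz2nn
        hgain_le hθ.le hδ0.le
  have hCE1_div : Tendsto (fun s => CE1 s / s) (𝓝[>] 0) (𝓝 (δ * I / log 2)) := by
    convert ((hasDerivAt_log one_ne_zero).tendsto_comp_sub_div (nhdsGT_le_nhdsNE 0)
      hg1_slope).const_mul (-(1 / θ)) using 2 with s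
    · rw [hCE1, log_one, sub_zero, mul_div_assoc]
    · field_simp
  convert (tendsto_const_nhds (x := δ * (μ {ω | z2 ω ≤ z1 ω}).toReal)).div hCE1_div
    (by positivity) using 1
  · ext s; rw [Pi.div_apply, div_div_eq_mul_div]
  · field_simp

/-- Under statistical QoS constraints with a constant-rate source,
the minimum energy per bit for confidential message transmission to receiver 1 satisfies
`lim_{snr→0⁺} (δ·P(z1 ≥ z2)·snr)/C_E1(snr) = P(z1 ≥ z2)·log 2 / E[(z1 − z2)·1{z1 ≥ z2}]`. -/
theorem minimum_energy_per_bit_confidential_constant_rate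
    {Ω : Type*} [MeasurableSpace Ω] (μ : Measure Ω) [IsProbabilityMeasure μ]
    (z1 z2 : Ω → ℝ) (hz1m : Measurable z1) (hz2m : Measurable z2)
    (hz1nn : ∀ ω, 0 ≤ z1 ω) (hz2nn : ∀ ω, 0 ≤ z2 ω)
    (M : ℝ) (hz1b : ∀ ω, z1 ω ≤ M) (hz2b : ∀ ω, z2 ω ≤ M)
    (hpos : 0 < (μ {ω | z2 ω < z1 ω}).toReal)
    (θ δ : ℝ) (hθ : 0 < θ) (hδ0 : 0 < δ) (hδ1 : δ ≤ 1)
    (R1 : ℝ → Ω → ℝ)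
    (hR1 : ∀ snr ω, R1 snr ω =
      if z2 ω ≤ z1 ω then
        Real.logb 2 ((1 + δ * snr * z1 ω) / (1 + δ * snr * z2 ω)) else 0)
    (g1 : ℝ → ℝ) (hg1 : ∀ snr, g1 snr = ∫ ω, Real.exp (-θ * R1 snr ω) ∂μ)
    (CE1 : ℝ → ℝ) (hCE1 : ∀ snr, CE1 snr = -(1 / θ) * Real.log (g1 snr)) :
    Filter.Tendsto
      (fun snr => (δ * (μ {ω | z2 ω ≤ z1 ω}).toReal * snr) / CE1 snr)
      (nhdsWithin 0 (Set.Ioi 0))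
      (nhds ((μ {ω | z2 ω ≤ z1 ω}).toReal * Real.log 2 /
        ∫ ω, (if z2 ω ≤ z1 ω then z1 ω - z2 ω else 0) ∂μ)) :=
  minimum_energy_per_bit_confidential_constant_rate_general μ z1 z2 hz1m hz2m hz2nn M hz1b hpos θ δ
    hθ hδ0 R1 hR1 g1 hg1 CE1 hCE1
end

section
/- Under statistical QoS constraints with a constant-rate source, the minimum energy per bit for common message transmission satisfies lim_{snr→0⁺} ([(1−δ1)·P(z1 ≥ z2) + (1−δ2)·P(z1 < z2)]·snr)/C_E0(snr) = [(1−δ1)·P(z1 ≥ z2) + (1−δ2)·P(z1 < z2)]·log_e 2 / ((1−δ1)·E[z2·1{z1 ≥ z2}] + (1−δ2)·E[z1·1{z1 < z2}]). -/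
/-!
For small `snr` the rate `R0(snr)` is, uniformly in `ω` (the fading is bounded), a nonnegative
quantity of order `snr`, with derivative `g/log 2` at `snr = 0`, where
`g = (1-δ1) z2 1{z1 ≥ z2} + (1-δ2) z1 1{z1 < z2}`. Dominated convergence applied to the
difference quotients of `e^{-θ R0}` gives `E[e^{-θ R0(snr)}]` the right derivative
`-θ E[g]/log 2` at `0`, where its value is `1`. Hence `C_E0(0) = 0` and `C_E0` has right
derivative `E[g]/log 2 > 0` there, so `c·snr / C_E0(snr) → c·log 2 / E[g]` for every constant `c`.
-/

open MeasureTheory Filter Set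
open scoped Topology

theorem hasDerivWithinAt_integral_of_dominated_slope
    {Ω E : Type*} [MeasurableSpace Ω] {μ : Measure Ω}
    [NormedAddCommGroup E] [NormedSpace ℝ E] [CompleteSpace E]
    {f : ℝ → Ω → E} {f' : Ω → E} {s : Set ℝ} {x : ℝ} {bound : Ω → ℝ}
    (hf_int : ∀ t ∈ insert x s, Integrable (f t) μ)
    (h_bound : ∀ t ∈ s \ {x}, ∀ᵐ ω ∂μ, ‖slope (f · ω) x t‖ ≤ bound ω)
    (bound_integrable : Integrable bound μ)
    (h_diff : ∀ᵐ ω ∂μ, HasDerivWithinAt (f · ω) (f' ω) s x) :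
    HasDerivWithinAt (fun t => ∫ ω, f t ω ∂μ) (∫ ω, f' ω ∂μ) s x := by
  have hx := hf_int x (mem_insert x s)
  have hslope : ∀ t ∈ s, slope (fun t => ∫ ω, f t ω ∂μ) x t = ∫ ω, slope (f · ω) x t ∂μ := by
    intro t ht
    simp only [slope_def_module]
    rw [integral_smul, integral_sub (hf_int t (mem_insert_of_mem x ht)) hx]
  rw [hasDerivWithinAt_iff_tendsto_slope]
  refine (tendsto_integral_filter_of_dominated_convergence bound ?_ ?_ bound_integrable
    (h_diff.mono fun ω hω => hasDerivWithinAt_iff_tendsto_slope.mp hω)).congr' ?_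
  · filter_upwards [self_mem_nhdsWithin] with t ht
    simp only [slope_def_module]
    exact ((hf_int t (mem_insert_of_mem x ht.1)).sub hx).aestronglyMeasurable.const_smul _
  · filter_upwards [self_mem_nhdsWithin] with t ht using h_bound t ht
  · filter_upwards [self_mem_nhdsWithin] with t ht using (hslope t ht.1).symm

theorem tendsto_const_mul_div_of_hasDerivWithinAt {g : ℝ → ℝ} {L : ℝ}
    (hg : HasDerivWithinAt g L (Ioi 0) 0) (hg0 : g 0 = 0) (hL : L ≠ 0) (c : ℝ) :
    Tendsto (fun s => c * s / g s) (𝓝[>] 0) (𝓝 (c / L)) := by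
  have h := (hasDerivWithinAt_iff_tendsto_slope' (lt_irrefl 0)).mp hg
  refine (tendsto_const_nhds.div h hL).congr fun s => ?_
  rw [Pi.div_apply, slope_def_field, hg0, sub_zero, sub_zero, div_div_eq_mul_div]

/-- Rate in bits when the fraction `δ` of the received power `snr * z` acts as interference. -/
noncomputable def rateWithInterference (δ snr z : ℝ) : ℝ :=
  Real.logb 2 (1 + (1 - δ) * snr * z / (1 + δ * snr * z))

section Rate

variable {δ snr z : ℝ}

theorem rateWithInterference_zero_snr (δ z : ℝ) : rateWithInterference δ 0 z = 0 := by
  simp [rateWithInterference]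

theorem rateWithInterference_nonneg (hδ : δ ∈ Icc 0 1) (hsnr : 0 ≤ snr) (hz : 0 ≤ z) :
    0 ≤ rateWithInterference δ snr z := by
  have : 0 ≤ δ * snr * z := by have := hδ.1; positivity
  have : 0 ≤ (1 - δ) * snr * z := by have := sub_nonneg.mpr hδ.2; positivity
  exact Real.logb_nonneg one_lt_two (by simp only [le_add_iff_nonneg_right]; positivity)

theorem rateWithInterference_le (hδ : δ ∈ Icc 0 1) (hsnr : 0 ≤ snr) (hz : 0 ≤ z) :
    rateWithInterference δ snr z ≤ snr * z / Real.log 2 := by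
  have hδsz : 0 ≤ δ * snr * z := by have := hδ.1; positivity
  have hnum : 0 ≤ (1 - δ) * snr * z := by have := sub_nonneg.mpr hδ.2; positivity
  have hsinr : (1 - δ) * snr * z / (1 + δ * snr * z) ≤ snr * z :=
    calc (1 - δ) * snr * z / (1 + δ * snr * z) ≤ (1 - δ) * snr * z :=
          div_le_self hnum (by linarith)
      _ ≤ snr * z := by nlinarith [hδ.1, mul_nonneg hsnr hz]
  rw [rateWithInterference, Real.logb, div_le_div_iff_of_pos_right (Real.log_pos one_lt_two)]
  linarith [Real.log_le_sub_one_of_pos (show 0 < 1 + (1 - δ) * snr * z / (1 + δ * snr * z) by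
    positivity)]

theorem hasDerivAt_rateWithInterference (δ z : ℝ) :
    HasDerivAt (rateWithInterference δ · z) ((1 - δ) * z / Real.log 2) 0 := by
  have hnum : HasDerivAt (fun s => (1 - δ) * s * z) ((1 - δ) * z) 0 := by
    simpa using ((hasDerivAt_id (0 : ℝ)).const_mul (1 - δ)).mul_const z
  have hden : HasDerivAt (fun s => 1 + δ * s * z) (δ * z) 0 := by
    simpa using (((hasDerivAt_id (0 : ℝ)).const_mul δ).mul_const z).const_add 1
  have harg := (hnum.div hden (by simp)).const_add 1
  exact ((harg.log (by simp)).div_const (Real.log 2)).congr_deriv (by simp)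

end Rate

noncomputable def commonMessageRate (δ1 δ2 snr z1 z2 : ℝ) : ℝ :=
  if z2 ≤ z1 then rateWithInterference δ1 snr z2 else rateWithInterference δ2 snr z1

section CommonRate

variable {δ1 δ2 snr z1 z2 : ℝ}

theorem commonMessageRate_nonneg (hδ1 : δ1 ∈ Icc 0 1) (hδ2 : δ2 ∈ Icc 0 1) (hsnr : 0 ≤ snr)
    (hz1 : 0 ≤ z1) (hz2 : 0 ≤ z2) : 0 ≤ commonMessageRate δ1 δ2 snr z1 z2 := by
  unfold commonMessageRate
  split_ifs
  exacts [rateWithInterference_nonneg hδ1 hsnr hz2, rateWithInterference_nonneg hδ2 hsnr hz1]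

theorem commonMessageRate_le (hδ1 : δ1 ∈ Icc 0 1) (hδ2 : δ2 ∈ Icc 0 1) (hsnr : 0 ≤ snr)
    (hz1 : 0 ≤ z1) (hz2 : 0 ≤ z2) :
    commonMessageRate δ1 δ2 snr z1 z2 ≤ snr * min z1 z2 / Real.log 2 := by
  unfold commonMessageRate
  split_ifs with h
  · simpa [min_eq_right h] using rateWithInterference_le hδ1 hsnr hz2
  · simpa [min_eq_left (le_of_not_ge h)] using rateWithInterference_le hδ2 hsnr hz1

theorem hasDerivAt_commonMessageRate (δ1 δ2 z1 z2 : ℝ) :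
    HasDerivAt (commonMessageRate δ1 δ2 · z1 z2)
      ((if z2 ≤ z1 then (1 - δ1) * z2 else (1 - δ2) * z1) / Real.log 2) 0 := by
  by_cases h : z2 ≤ z1
  · simpa only [commonMessageRate, if_pos h] using hasDerivAt_rateWithInterference δ1 z2
  · simpa only [commonMessageRate, if_neg h] using hasDerivAt_rateWithInterference δ2 z1

theorem commonMessageRate_zero_snr (δ1 δ2 z1 z2 : ℝ) : commonMessageRate δ1 δ2 0 z1 z2 = 0 := by
  simp [commonMessageRate, rateWithInterference_zero_snr]

theorem measurable_commonMessageRate (δ1 δ2 snr : ℝ) :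
    Measurable fun z : ℝ × ℝ => commonMessageRate δ1 δ2 snr z.1 z.2 := by
  unfold commonMessageRate rateWithInterference Real.logb
  exact Measurable.ite (measurableSet_le measurable_snd measurable_fst) (by fun_prop) (by fun_prop)

end CommonRate

theorem abs_slope_exp_neg_mul_le {r : ℝ → ℝ} {θ K t : ℝ} (hθ : 0 ≤ θ) (ht : 0 < t)
    (hr0 : r 0 = 0) (hr : 0 ≤ r t) (hrK : r t ≤ K * t) :
    |slope (fun t => Real.exp (-θ * r t)) 0 t| ≤ θ * K := by
  have hexp : Real.exp (-θ * r t) ≤ 1 := Real.exp_le_one_iff.mpr (by nlinarith)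
  rw [slope_def_field, hr0, mul_zero, Real.exp_zero, sub_zero, abs_div, abs_of_pos ht,
    div_le_iff₀ ht, abs_sub_comm, abs_of_nonneg (sub_nonneg.mpr hexp)]
  have := Real.one_sub_le_exp_neg (θ * r t)
  rw [← neg_mul] at this
  nlinarith

section Fading

variable {Ω : Type*} [MeasurableSpace Ω] {μ : Measure Ω} {z1 z2 : Ω → ℝ}

theorem integral_ite_le_mul (hz1m : Measurable z1) (hz2m : Measurable z2)
    (hz1 : Integrable z1 μ) (hz2 : Integrable z2 μ) (a b : ℝ) :
    ∫ ω, (if z2 ω ≤ z1 ω then a * z2 ω else b * z1 ω) ∂μ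
      = a * (∫ ω, (if z2 ω ≤ z1 ω then z2 ω else 0) ∂μ)
        + b * (∫ ω, (if z1 ω < z2 ω then z1 ω else 0) ∂μ) := by
  have h2 : Integrable (fun ω => if z2 ω ≤ z1 ω then z2 ω else 0) μ :=
    (hz2.indicator (measurableSet_le hz2m hz1m)).congr
      (ae_of_all μ fun ω => by simp [Set.indicator_apply])
  have h1 : Integrable (fun ω => if z1 ω < z2 ω then z1 ω else 0) μ :=
    (hz1.indicator (measurableSet_lt hz1m hz2m)).congr
      (ae_of_all μ fun ω => by simp [Set.indicator_apply])
  rw [← integral_const_mul, ← integral_const_mul, ← integral_add (h2.const_mul a) (h1.const_mul b)]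
  congr 1 with ω
  by_cases h : z2 ω ≤ z1 ω
  · simp [h, not_lt.mpr h]
  · simp [h, not_le.mp h]

theorem hasDerivWithinAt_integral_exp_neg_commonMessageRate [IsFiniteMeasure μ]
    (hz1m : Measurable z1) (hz2m : Measurable z2) (hz1 : ∀ ω, 0 ≤ z1 ω) (hz2 : ∀ ω, 0 ≤ z2 ω)
    {M : ℝ} (hz2M : ∀ ω, z2 ω ≤ M) {θ δ1 δ2 : ℝ} (hθ : 0 ≤ θ)
    (hδ1 : δ1 ∈ Icc 0 1) (hδ2 : δ2 ∈ Icc 0 1) :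
    HasDerivWithinAt
      (fun snr => ∫ ω, Real.exp (-θ * commonMessageRate δ1 δ2 snr (z1 ω) (z2 ω)) ∂μ)
      (-θ * (∫ ω, (if z2 ω ≤ z1 ω then (1 - δ1) * z2 ω else (1 - δ2) * z1 ω) ∂μ)
        / Real.log 2) (Ioi 0) 0 := by
  set r : ℝ → Ω → ℝ := fun snr ω => commonMessageRate δ1 δ2 snr (z1 ω) (z2 ω)
  have hr_meas (snr : ℝ) : Measurable (r snr) :=
    (measurable_commonMessageRate δ1 δ2 snr).comp (hz1m.prodMk hz2m)
  have hr_nonneg {snr : ℝ} (hsnr : 0 ≤ snr) (ω : Ω) : 0 ≤ r snr ω :=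
    commonMessageRate_nonneg hδ1 hδ2 hsnr (hz1 ω) (hz2 ω)
  have hr_zero (ω : Ω) : r 0 ω = 0 := commonMessageRate_zero_snr _ _ _ _
  rw [mul_div_assoc, ← integral_div, ← integral_const_mul]
  refine hasDerivWithinAt_integral_of_dominated_slope (bound := fun _ => θ * (M / Real.log 2))
    ?_ ?_ (integrable_const _) (ae_of_all μ fun ω => ?_)
  · intro snr hsnr
    refine Integrable.of_bound ((hr_meas snr).const_mul _).exp.aestronglyMeasurable 1
      (ae_of_all μ fun ω => ?_)
    rw [Ioi_insert] at hsnr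
    rw [Real.norm_eq_abs, abs_of_pos (Real.exp_pos _), Real.exp_le_one_iff]
    nlinarith [hr_nonneg hsnr ω]
  · intro snr hsnr
    refine ae_of_all μ fun ω => abs_slope_exp_neg_mul_le hθ hsnr.1 (hr_zero ω)
      (hr_nonneg hsnr.1.le ω) ?_
    calc r snr ω ≤ snr * min (z1 ω) (z2 ω) / Real.log 2 :=
          commonMessageRate_le hδ1 hδ2 hsnr.1.le (hz1 ω) (hz2 ω)
      _ ≤ snr * M / Real.log 2 := by
          gcongr
          · exact hsnr.1.le
          · exact (min_le_right _ _).trans (hz2M ω)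
      _ = M / Real.log 2 * snr := by ring
  · have h := ((hasDerivAt_commonMessageRate δ1 δ2 (z1 ω) (z2 ω)).const_mul (-θ)).exp
    refine (h.congr_deriv ?_).hasDerivWithinAt
    simp only [commonMessageRate_zero_snr, mul_zero, Real.exp_zero, one_mul]

end Fading

/-- Under statistical QoS constraints with a constant-rate source,
the minimum energy per bit for common message transmission satisfies
`lim_{snr→0⁺} ([(1−δ1)·P(z1 ≥ z2) + (1−δ2)·P(z1 < z2)]·snr)/C_E0(snr)
  = [(1−δ1)·P(z1 ≥ z2) + (1−δ2)·P(z1 < z2)]·log 2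
    / ((1−δ1)·E[z2·1{z1 ≥ z2}] + (1−δ2)·E[z1·1{z1 < z2}])`. -/
theorem minimum_energy_per_bit_common_constant_rate
    {Ω : Type*} [MeasurableSpace Ω] (μ : Measure Ω) [IsProbabilityMeasure μ]
    (z1 z2 : Ω → ℝ) (hz1m : Measurable z1) (hz2m : Measurable z2)
    (hz1nn : ∀ ω, 0 ≤ z1 ω) (hz2nn : ∀ ω, 0 ≤ z2 ω)
    (M : ℝ) (hz1b : ∀ ω, z1 ω ≤ M) (hz2b : ∀ ω, z2 ω ≤ M)
    (θ δ1 δ2 : ℝ) (hθ : 0 < θ)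
    (hδ1 : δ1 ∈ Set.Ico (0 : ℝ) 1) (hδ2 : δ2 ∈ Set.Ico (0 : ℝ) 1)
    (hden : 0 < (1 - δ1) * (∫ ω, (if z2 ω ≤ z1 ω then z2 ω else 0) ∂μ)
      + (1 - δ2) * (∫ ω, (if z1 ω < z2 ω then z1 ω else 0) ∂μ))
    (R0 : ℝ → Ω → ℝ)
    (hR0 : ∀ snr ω, R0 snr ω =
      (if z2 ω ≤ z1 ω then
        Real.logb 2 (1 + (1 - δ1) * snr * z2 ω / (1 + δ1 * snr * z2 ω)) else 0)
      + (if z1 ω < z2 ω then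
        Real.logb 2 (1 + (1 - δ2) * snr * z1 ω / (1 + δ2 * snr * z1 ω)) else 0))
    (CE0 : ℝ → ℝ)
    (hCE0 : ∀ snr, CE0 snr = -(1 / θ) * Real.log (∫ ω, Real.exp (-θ * R0 snr ω) ∂μ)) :
    Filter.Tendsto
      (fun snr => (((1 - δ1) * (μ {ω | z2 ω ≤ z1 ω}).toReal
        + (1 - δ2) * (μ {ω | z1 ω < z2 ω}).toReal) * snr) / CE0 snr)
      (nhdsWithin 0 (Set.Ioi 0))
      (nhds (((1 - δ1) * (μ {ω | z2 ω ≤ z1 ω}).toReal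
          + (1 - δ2) * (μ {ω | z1 ω < z2 ω}).toReal) * Real.log 2 /
        ((1 - δ1) * (∫ ω, (if z2 ω ≤ z1 ω then z2 ω else 0) ∂μ)
          + (1 - δ2) * (∫ ω, (if z1 ω < z2 ω then z1 ω else 0) ∂μ)))) := by
  have hR0_eq (snr : ℝ) (ω : Ω) : R0 snr ω = commonMessageRate δ1 δ2 snr (z1 ω) (z2 ω) := by
    by_cases h : z2 ω ≤ z1 ω
    · simp [hR0, commonMessageRate, rateWithInterference, h, not_lt.mpr h]
    · simp [hR0, commonMessageRate, rateWithInterference, h, not_le.mp h]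
  have hz1 : Integrable z1 μ := Integrable.of_bound hz1m.aestronglyMeasurable M
    (ae_of_all μ fun ω => by simpa [abs_of_nonneg (hz1nn ω)] using hz1b ω)
  have hz2 : Integrable z2 μ := Integrable.of_bound hz2m.aestronglyMeasurable M
    (ae_of_all μ fun ω => by simpa [abs_of_nonneg (hz2nn ω)] using hz2b ω)
  have hF := hasDerivWithinAt_integral_exp_neg_commonMessageRate (μ := μ) hz1m hz2m hz1nn hz2nn
    hz2b hθ.le (Ico_subset_Icc_self hδ1) (Ico_subset_Icc_self hδ2)
  rw [integral_ite_le_mul hz1m hz2m hz1 hz2] at hF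
  have hF0 : ∫ ω, Real.exp (-θ * commonMessageRate δ1 δ2 0 (z1 ω) (z2 ω)) ∂μ = 1 := by
    simp [commonMessageRate_zero_snr]
  have hCE : HasDerivWithinAt CE0 (((1 - δ1) * (∫ ω, (if z2 ω ≤ z1 ω then z2 ω else 0) ∂μ)
      + (1 - δ2) * (∫ ω, (if z1 ω < z2 ω then z1 ω else 0) ∂μ)) / Real.log 2) (Ioi 0) 0 := by
    have h := (hF.log (by simp only [hF0]; exact one_ne_zero)).const_mul (-(1 / θ))
    rw [hF0] at h
    rw [funext hCE0]
    simp only [hR0_eq]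
    exact h.congr_deriv (by field_simp)
  have hCE0_zero : CE0 0 = 0 := by simp [hCE0, hR0_eq, commonMessageRate_zero_snr]
  have h := tendsto_const_mul_div_of_hasDerivWithinAt hCE hCE0_zero
    (div_pos hden (Real.log_pos one_lt_two)).ne' (((1 - δ1) * (μ {ω | z2 ω ≤ z1 ω}).toReal
        + (1 - δ2) * (μ {ω | z1 ω < z2 ω}).toReal))
  rwa [div_div_eq_mul_div] at h
end

section
/- For the exponential fading model, P(z1 ≥ z2) = 1/(1+γ) and E[(z1 − z2)·1{z1 ≥ z2}] = 1/(1+γ); consequently P(z1 ≥ z2)·log_e 2 / E[(z1 − z2)·1{z1 ≥ z2}] = log_e 2 (i.e., the minimum energy per bit of the first user's confidential message equals log_e 2, independent of γ). -/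
/-! By memorylessness, for `y ≥ 0` the overshoot of an `Exp(1)` variable over `y` is again
`Exp(1)`-distributed on the event `{z1 ≥ y}`, which has probability `e^{-y}`. Conditioning on
`z2`, both `P(z1 ≥ z2)` and `E[(z1 - z2)·1{z1 ≥ z2}]` are therefore `E[e^{-z2}]` times `1`
(the total mass, resp. the mean of `Exp(1)`), and the Laplace transform of `Exp(1/γ)` gives
`E[e^{-z2}] = γ⁻¹ / (γ⁻¹ + 1) = 1 / (1 + γ)`. -/

open MeasureTheory ProbabilityTheory Filter Set

open Real

open scoped ENNReal

namespace ProbabilityTheory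

lemma expMeasure_eq_withDensity (r : ℝ) :
    expMeasure r = volume.withDensity (exponentialPDF r) := rfl

@[fun_prop]
lemma measurable_exponentialPDF (r : ℝ) : Measurable (exponentialPDF r) :=
  (measurable_exponentialPDFReal r).ennreal_ofReal

lemma lintegral_expMeasure (r : ℝ) {g : ℝ → ℝ≥0∞} (hg : Measurable g) :
    ∫⁻ x, g x ∂expMeasure r = ∫⁻ x, exponentialPDF r x * g x :=
  lintegral_withDensity_eq_lintegral_mul _ (measurable_exponentialPDF r) hg

lemma ae_nonneg_expMeasure (r : ℝ) : ∀ᵐ x ∂expMeasure r, 0 ≤ x := by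
  rw [ae_iff, expMeasure_eq_withDensity, withDensity_apply _ (by measurability)]
  simp only [not_le]
  exact lintegral_exponentialPDF_of_nonpos le_rfl

lemma lintegral_expMeasure_ite_le_sub (r : ℝ) {y : ℝ} (hy : 0 ≤ y) {g : ℝ → ℝ≥0∞}
    (hg : Measurable g) :
    ∫⁻ x, (if y ≤ x then g (x - y) else 0) ∂expMeasure r
      = ENNReal.ofReal (exp (-(r * y))) * ∫⁻ x, g x ∂expMeasure r := by
  have hg' : Measurable fun x => if y ≤ x then g (x - y) else 0 :=
    Measurable.ite measurableSet_Ici (hg.comp (measurable_id.sub_const y)) measurable_const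
  rw [lintegral_expMeasure r hg', lintegral_expMeasure r hg,
    ← lintegral_const_mul _ (by fun_prop), ← lintegral_add_right_eq_self _ y]
  congr 1 with x
  rcases le_or_gt 0 x with hx | hx
  · rw [if_pos (by linarith), add_sub_cancel_right, exponentialPDF_of_nonneg (by linarith),
      exponentialPDF_of_nonneg hx, ← mul_assoc, ← ENNReal.ofReal_mul (exp_nonneg _),
      mul_left_comm, ← exp_add]
    ring_nf
  · rw [if_neg (by linarith), exponentialPDF_of_neg hx, mul_zero, zero_mul, mul_zero]

lemma lintegral_exp_neg_mul_expMeasure {r s : ℝ} (hr : 0 < r) (hs : 0 ≤ s) :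
    ∫⁻ y, ENNReal.ofReal (exp (-(s * y))) ∂expMeasure r = ENNReal.ofReal (r / (r + s)) := by
  rw [lintegral_expMeasure r (by fun_prop)]
  calc ∫⁻ y, exponentialPDF r y * ENNReal.ofReal (exp (-(s * y)))
      = ∫⁻ y, ENNReal.ofReal (r / (r + s)) * exponentialPDF (r + s) y := by
        congr 1 with y
        rcases le_or_gt 0 y with hy | hy
        · rw [exponentialPDF_of_nonneg hy, exponentialPDF_of_nonneg hy,
            ← ENNReal.ofReal_mul (by positivity), ← ENNReal.ofReal_mul (by positivity)]
          congr 1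
          field_simp
          rw [← exp_add]
          ring_nf
        · rw [exponentialPDF_of_neg hy, exponentialPDF_of_neg hy, zero_mul, mul_zero]
    _ = ENNReal.ofReal (r / (r + s)) := by
      rw [lintegral_const_mul _ (by fun_prop), lintegral_exponentialPDF_eq_one (by positivity),
        mul_one]

lemma lintegral_ofReal_expMeasure {r : ℝ} (hr : 0 < r) :
    ∫⁻ x, ENNReal.ofReal x ∂expMeasure r = ENNReal.ofReal r⁻¹ := by
  rw [lintegral_expMeasure r (by fun_prop)]
  calc ∫⁻ x, exponentialPDF r x * ENNReal.ofReal x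
      = ∫⁻ x, ENNReal.ofReal r⁻¹ * gammaPDF 2 r x := by
        congr 1 with x
        rcases le_or_gt 0 x with hx | hx
        · rw [exponentialPDF_of_nonneg hx, gammaPDF_of_nonneg hx,
            ← ENNReal.ofReal_mul (by positivity), ← ENNReal.ofReal_mul (by positivity),
            Gamma_two]
          congr 1
          rw [rpow_two, show (2 : ℝ) - 1 = 1 by norm_num, rpow_one]
          field_simp
        · rw [exponentialPDF_of_neg hx, gammaPDF_of_neg hx, zero_mul, mul_zero]
    _ = ENNReal.ofReal r⁻¹ := by
      rw [lintegral_const_mul' _ _ ENNReal.ofReal_ne_top, lintegral_gammaPDF_eq_one two_pos hr,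
        mul_one]

lemma lintegral_prod_expMeasure_ite_le_sub {a b : ℝ} (ha : 0 < a) (hb : 0 < b)
    {g : ℝ → ℝ≥0∞} (hg : Measurable g) :
    ∫⁻ p, (if p.2 ≤ p.1 then g (p.1 - p.2) else 0) ∂(expMeasure a).prod (expMeasure b)
      = ENNReal.ofReal (b / (b + a)) * ∫⁻ x, g x ∂expMeasure a := by
  have := isProbabilityMeasure_expMeasure ha
  have := isProbabilityMeasure_expMeasure hb
  rw [lintegral_prod_symm' _ <| Measurable.ite (measurableSet_le measurable_snd measurable_fst)
    (by fun_prop) measurable_const]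
  calc ∫⁻ y, ∫⁻ x, (if y ≤ x then g (x - y) else 0) ∂expMeasure a ∂expMeasure b
      = ∫⁻ y, ENNReal.ofReal (exp (-(a * y))) * ∫⁻ x, g x ∂expMeasure a ∂expMeasure b :=
        lintegral_congr_ae <| (ae_nonneg_expMeasure b).mono fun y hy =>
          lintegral_expMeasure_ite_le_sub a hy hg
    _ = ENNReal.ofReal (b / (b + a)) * ∫⁻ x, g x ∂expMeasure a := by
      rw [lintegral_mul_const _ (by fun_prop), lintegral_exp_neg_mul_expMeasure hb ha.le]

theorem IndepFun.lintegral_comp_eq_lintegral_prod {Ω α β : Type*}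
    [MeasurableSpace Ω] [MeasurableSpace α] [MeasurableSpace β] {μ : Measure Ω}
    [IsFiniteMeasure μ] {X : Ω → α} {Y : Ω → β} (hX : Measurable X) (hY : Measurable Y)
    (hXY : IndepFun X Y μ) {f : α × β → ℝ≥0∞} (hf : Measurable f) :
    ∫⁻ ω, f (X ω, Y ω) ∂μ = ∫⁻ p, f p ∂(μ.map X).prod (μ.map Y) := by
  rw [← hXY.map_prod_eq_prod_map_map hX.aemeasurable hY.aemeasurable,
    lintegral_map hf (hX.prodMk hY)]

theorem IndepFun.lintegral_ite_le_sub_of_map_eq_expMeasure {Ω : Type*} [MeasurableSpace Ω]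
    {μ : Measure Ω} [IsFiniteMeasure μ] {X Y : Ω → ℝ} (hX : Measurable X)
    (hY : Measurable Y) (hXY : IndepFun X Y μ) {a b : ℝ} (ha : 0 < a) (hb : 0 < b)
    (hXlaw : μ.map X = expMeasure a) (hYlaw : μ.map Y = expMeasure b)
    {g : ℝ → ℝ≥0∞} (hg : Measurable g) :
    ∫⁻ ω, (if Y ω ≤ X ω then g (X ω - Y ω) else 0) ∂μ
      = ENNReal.ofReal (b / (b + a)) * ∫⁻ x, g x ∂expMeasure a := by
  rw [hXY.lintegral_comp_eq_lintegral_prod (f := fun p => if p.2 ≤ p.1 then g (p.1 - p.2) else 0)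
    hX hY (Measurable.ite (measurableSet_le measurable_snd measurable_fst) (by fun_prop)
      measurable_const), hXlaw, hYlaw, lintegral_prod_expMeasure_ite_le_sub ha hb hg]

end ProbabilityTheory

/-- For independent exponential fading powers (`z1` with mean 1, `z2`
with mean `γ`), `P(z1 ≥ z2) = 1/(1+γ)` and `E[(z1 − z2)·1{z1 ≥ z2}] = 1/(1+γ)`;
consequently `P(z1 ≥ z2)·log 2 / E[(z1 − z2)·1{z1 ≥ z2}] = log 2`, i.e. the minimum
energy per bit of the first user's confidential message equals `log 2`, independent
of `γ`. -/
theorem exponential_fading_min_energy_per_bit_user1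
    {Ω : Type*} [MeasurableSpace Ω] (μ : Measure Ω) [IsProbabilityMeasure μ]
    (z1 z2 : Ω → ℝ) (hz1m : Measurable z1) (hz2m : Measurable z2)
    (hindep : IndepFun z1 z2 μ)
    (γ : ℝ) (hγ : 0 < γ)
    (hz1law : μ.map z1 = expMeasure 1)
    (hz2law : μ.map z2 = expMeasure γ⁻¹) :
    (μ {ω | z2 ω ≤ z1 ω}).toReal = 1 / (1 + γ) ∧
    (∫ ω, (if z2 ω ≤ z1 ω then z1 ω - z2 ω else 0) ∂μ) = 1 / (1 + γ) ∧
    (μ {ω | z2 ω ≤ z1 ω}).toReal * Real.log 2 /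
      (∫ ω, (if z2 ω ≤ z1 ω then z1 ω - z2 ω else 0) ∂μ) = Real.log 2 := by
  have hS : MeasurableSet {ω | z2 ω ≤ z1 ω} := measurableSet_le hz2m hz1m
  have hrate : γ⁻¹ / (γ⁻¹ + 1) = 1 / (1 + γ) := by field_simp
  have key (g : ℝ → ℝ≥0∞) (hg : Measurable g) :=
    hindep.lintegral_ite_le_sub_of_map_eq_expMeasure hz1m hz2m one_pos (inv_pos.mpr hγ)
      hz1law hz2law hg
  have hP : μ {ω | z2 ω ≤ z1 ω} = ENNReal.ofReal (1 / (1 + γ)) := by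
    have := isProbabilityMeasure_expMeasure one_pos
    simpa [← lintegral_indicator_one hS, indicator_apply, hrate]
      using key (fun _ => 1) measurable_const
  have hE : ∫ ω, (if z2 ω ≤ z1 ω then z1 ω - z2 ω else 0) ∂μ = 1 / (1 + γ) := by
    have hnonneg : 0 ≤ fun ω => if z2 ω ≤ z1 ω then z1 ω - z2 ω else 0 := fun ω => by
      dsimp only [Pi.zero_apply]
      split_ifs with h <;> linarith
    rw [integral_eq_lintegral_of_nonneg_ae (ae_of_all _ hnonneg)
      (Measurable.ite hS (hz1m.sub hz2m) measurable_const).aestronglyMeasurable]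
    simp only [apply_ite ENNReal.ofReal, ENNReal.ofReal_zero]
    rw [key _ ENNReal.measurable_ofReal, lintegral_ofReal_expMeasure one_pos, inv_one,
      ENNReal.ofReal_one, mul_one, hrate, ENNReal.toReal_ofReal (by positivity)]
  have hpos : 0 < 1 / (1 + γ) := by positivity
  refine ⟨by rw [hP, ENNReal.toReal_ofReal hpos.le], hE, ?_⟩
  rw [hP, hE, ENNReal.toReal_ofReal hpos.le, mul_div_right_comm, div_self hpos.ne', one_mul]
end

section
/- The effective bandwidth of the ON–OFF discrete-time Markov source matches a given effective capacity C at the ON-state rate r* = (1/θ)·log_e[(e^{2θC} − p11·e^{θC})/(1 − p11 − p22 + p22·e^{θC})], i.e., a(θ, r*) = C. -/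
open Real

/-- The effective bandwidth of the ON–OFF discrete-time Markov source
matches a given effective capacity `C` at the ON-state rate
`r* = (1/θ)·log[(e^{2θC} − p11·e^{θC})/(1 − p11 − p22 + p22·e^{θC})]`,
i.e. `a(θ, r*) = C`. -/
theorem discrete_markov_effective_bandwidth_matches
    (θ C p11 p22 : ℝ) (hθ : 0 < θ) (hC : 0 < C)
    (hp11 : p11 ∈ Set.Ioo (0 : ℝ) 1) (hp22 : p22 ∈ Set.Ioo (0 : ℝ) 1)
    (a : ℝ → ℝ)
    (ha : ∀ r, a r = (1 / θ) * Real.log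
      ((p11 + p22 * Real.exp (r * θ) +
        Real.sqrt ((p11 + p22 * Real.exp (r * θ)) ^ 2
          - 4 * (p11 + p22 - 1) * Real.exp (r * θ))) / 2))
    (rstar : ℝ)
    (hrstar : rstar = (1 / θ) * Real.log
      ((Real.exp (2 * θ * C) - p11 * Real.exp (θ * C)) /
        (1 - p11 - p22 + p22 * Real.exp (θ * C)))) :
    a rstar = C := by
  obtain ⟨h11, h11'⟩ := hp11
  obtain ⟨h22, h22'⟩ := hp22
  set E := Real.exp (θ * C) with hE
  have hE1 : 1 < E := by
    rw [hE]
    exact Real.one_lt_exp_iff.mpr (mul_pos hθ hC)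
  have hE2 : Real.exp (2 * θ * C) = E ^ 2 := by
    rw [hE, ← Real.exp_nat_mul]; ring_nf
  have hD : 0 < 1 - p11 - p22 + p22 * E := by nlinarith
  have hN : 0 < E ^ 2 - p11 * E := by nlinarith
  set D := 1 - p11 - p22 + p22 * E with hDdef
  set N := E ^ 2 - p11 * E with hNdef
  set X := N / D with hXdef
  have hXpos : 0 < X := div_pos hN hD
  have hXD : X * D = N := div_mul_cancel₀ N (ne_of_gt hD)
  have hexp : Real.exp (rstar * θ) = X := by
    rw [hrstar, hE2]
    rw [show (1 / θ) * Real.log (N / D) * θ = Real.log (N / D) by field_simp]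
    exact Real.exp_log hXpos
  -- positivity of 2E - p11 - p22*X
  have hpos : 0 ≤ 2 * E - (p11 + p22 * X) := by
    have key : 0 < (2 * E - p11) * D - p22 * N := by nlinarith [sq_nonneg (E - p11), sq_nonneg (E - 1)]
    have : p22 * X < 2 * E - p11 := by
      rw [hXdef, mul_div_assoc', div_lt_iff₀ hD]
      nlinarith
    linarith
  have hdisc : (p11 + p22 * X) ^ 2 - 4 * (p11 + p22 - 1) * X
      = (2 * E - (p11 + p22 * X)) ^ 2 := by
    have hD' : D = 1 - p11 - p22 + p22 * E := hDdef
    nlinarith [hXD]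
  rw [ha, hexp, hdisc, Real.sqrt_sq hpos]
  have : (p11 + p22 * X + (2 * E - (p11 + p22 * X))) / 2 = E := by ring
  rw [this, hE, Real.log_exp]
  field_simp
end

section
/- For fixed θ > 0 and C > 0, the function s ↦ (s/θ)·log_e((e^{θC} − (1 − s))/s) is strictly increasing on the interval (0, 1]; that is, the maximum average arrival rate of an ON–OFF discrete Markov source with p11 = 1 − s and p22 = s increases as the ON-state probability s increases. -/
open Real Set

/-! With `a = e^{θC} - 1 > 0` the rate is `(s * log ((a + s) / s)) / θ`, whose derivative in `s`
is `(log ((a + s) / s) - a / (a + s)) / θ`. This is positive by the strict form of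
`1 - y⁻¹ < log y` at `y = (a + s) / s ≠ 1`. -/

namespace Real

lemma one_sub_inv_lt_log {x : ℝ} (hx : 0 < x) (hx1 : x ≠ 1) : 1 - x⁻¹ < log x := by
  have h := log_lt_sub_one_of_pos (inv_pos.2 hx) (inv_ne_one.2 hx1)
  rw [log_inv] at h
  linarith

lemma hasDerivAt_mul_log_add_div {a x : ℝ} (hx : x ≠ 0) (hax : a + x ≠ 0) :
    HasDerivAt (fun s => s * log ((a + s) / s)) (log ((a + x) / x) - a / (a + x)) x := by
  have hquot : HasDerivAt (fun s => (a + s) / s) ((1 * x - (a + x) * 1) / x ^ 2) x :=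
    ((hasDerivAt_id x).const_add a).div (hasDerivAt_id x) hx
  refine ((hasDerivAt_id' x).fun_mul (hquot.log (div_ne_zero hax hx))).congr_deriv ?_
  field_simp
  ring

lemma strictMonoOn_mul_log_add_div {a : ℝ} (ha : 0 < a) :
    StrictMonoOn (fun s => s * log ((a + s) / s)) (Ioi 0) := by
  have hderiv : ∀ x ∈ Ioi (0 : ℝ),
      HasDerivAt (fun s => s * log ((a + s) / s)) (log ((a + x) / x) - a / (a + x)) x :=
    fun x hx => hasDerivAt_mul_log_add_div (ne_of_gt hx) (add_pos ha hx).ne'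
  refine strictMonoOn_of_hasDerivWithinAt_pos (convex_Ioi 0)
    (fun x hx => (hderiv x hx).continuousAt.continuousWithinAt)
    (fun x hx => (hderiv x (interior_subset hx)).hasDerivWithinAt) fun x hx => ?_
  rw [interior_Ioi, mem_Ioi] at hx
  have hax : 0 < a + x := by linarith
  have hratio : (a + x) / x ≠ 1 := by
    rw [Ne, div_eq_one_iff_eq hx.ne']
    linarith
  have hinv : a / (a + x) = 1 - ((a + x) / x)⁻¹ := by
    field_simp
    ring
  rw [sub_pos, hinv]
  exact one_sub_inv_lt_log (div_pos hax hx) hratio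

end Real

/-- For fixed `θ > 0` and `C > 0`, the function
`s ↦ (s/θ)·log((e^{θC} − (1 − s))/s)` is strictly increasing on `(0, 1]`; that is, the
maximum average arrival rate of an ON–OFF discrete Markov source with `p11 = 1 − s` and
`p22 = s` increases as the ON-state probability `s` increases. -/
theorem discrete_markov_throughput_strictMono_in_on_probability
    (θ C : ℝ) (hθ : 0 < θ) (hC : 0 < C) :
    StrictMonoOn (fun s : ℝ => (s / θ) * Real.log ((Real.exp (θ * C) - (1 - s)) / s))
      (Set.Ioc 0 1) := by
  intro x hx y hy hxy
  have ha : 0 < Real.exp (θ * C) - 1 := sub_pos.2 (one_lt_exp_iff.2 (mul_pos hθ hC))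
  have hmono := strictMonoOn_mul_log_add_div ha hx.1 hy.1 hxy
  have hshift : ∀ s : ℝ, Real.exp (θ * C) - (1 - s) = Real.exp (θ * C) - 1 + s :=
    fun s => by ring
  simp only [hshift, div_mul_eq_mul_div]
  exact div_lt_div_of_pos_right hmono hθ
end

section
/- If g is continuous on a right-neighborhood of 0, differentiable at 0, and g(0) = 1, then the discrete-Markov throughput map r(x) = (P_on/θ)·log_e[(1 − p11·g(x))/((1 − p11 − p22)·g(x)² + p22·g(x))] is differentiable at 0 with r'(0) = −g'(0)/θ. -/
open Real

/-! With `φ u = (1 - p11 u) / ((1 - p11 - p22) u² + p22 u)` we have `r = (P_on/θ) · log ∘ φ ∘ g`.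
Both numerator and denominator of `φ` equal `1 - p11` at `u = 1`, so `φ 1 = 1` and the quotient
rule gives `φ' 1 = -(2 - p11 - p22) / (1 - p11) = -1 / P_on`; the chain rule through `g 0 = 1`
then yields `r' 0 = (P_on/θ) · (-1/P_on) · g' 0 = -g' 0 / θ`. -/

noncomputable def onOffRatio (p11 p22 u : ℝ) : ℝ :=
  (1 - p11 * u) / ((1 - p11 - p22) * u ^ 2 + p22 * u)

section onOffRatio

variable {p11 : ℝ} (p22 : ℝ)

lemma onOffRatio_one (hp11 : p11 ≠ 1) : onOffRatio p11 p22 1 = 1 := by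
  rw [onOffRatio, div_eq_one_iff_eq (by convert sub_ne_zero.mpr hp11.symm using 1; ring)]
  ring

lemma hasDerivAt_onOffRatio_one (hp11 : p11 ≠ 1) :
    HasDerivAt (onOffRatio p11 p22) (-(2 - p11 - p22) / (1 - p11)) 1 := by
  have h1 : 1 - p11 ≠ 0 := sub_ne_zero.mpr hp11.symm
  have hnum : HasDerivAt (fun u : ℝ => 1 - p11 * u) (-p11) 1 := by
    simpa using ((hasDerivAt_id (1 : ℝ)).const_mul p11).const_sub 1
  have hden : HasDerivAt (fun u : ℝ => (1 - p11 - p22) * u ^ 2 + p22 * u)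
      ((1 - p11 - p22) * 2 + p22) 1 :=
    (((hasDerivAt_pow 2 (1 : ℝ)).const_mul (1 - p11 - p22)).add
      ((hasDerivAt_id' (1 : ℝ)).const_mul p22)).congr_deriv (by norm_num)
  have hden1 : (1 - p11 - p22) * (1 : ℝ) ^ 2 + p22 * 1 = 1 - p11 := by ring
  refine (hnum.div hden (hden1.symm ▸ h1)).congr_deriv ?_
  rw [hden1]
  field_simp
  ring

end onOffRatio

lemma HasDerivAt.log_of_eq_one {f : ℝ → ℝ} {f' x : ℝ} (hf : HasDerivAt f f' x) (h1 : f x = 1) :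
    HasDerivAt (fun y => Real.log (f y)) f' x := by
  simpa [h1] using hf.log (by simp [h1])

theorem discrete_markov_throughput_first_derivative_general
    (θ p11 p22 : ℝ)
    (hp11 : p11 ∈ Set.Ico (0 : ℝ) 1) (hp22 : p22 ∈ Set.Icc (0 : ℝ) 1)
    (Pon : ℝ) (hPon : Pon = (1 - p11) / (2 - p11 - p22))
    (g : ℝ → ℝ) (g' : ℝ)
    (hg0 : g 0 = 1)
    (hgderiv : HasDerivWithinAt g g' (Set.Ici 0) 0)
    (r : ℝ → ℝ)
    (hr : ∀ x, r x = (Pon / θ) * Real.log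
      ((1 - p11 * g x) / ((1 - p11 - p22) * (g x) ^ 2 + p22 * g x))) :
    HasDerivWithinAt r (-g' / θ) (Set.Ici 0) 0 := by
  have hp11' : p11 ≠ 1 := hp11.2.ne
  have hsum : 2 - p11 - p22 ≠ 0 := by linarith [hp11.2, hp22.2]
  have hF : HasDerivAt (fun u => Pon / θ * log (onOffRatio p11 p22 u)) (-1 / θ) (g 0) := by
    rw [hg0]
    refine ((HasDerivAt.log_of_eq_one (hasDerivAt_onOffRatio_one p22 hp11')
      (onOffRatio_one p22 hp11')).const_mul (Pon / θ)).congr_deriv ?_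
    have : 1 - p11 ≠ 0 := sub_ne_zero.mpr hp11'.symm
    rw [hPon]
    field_simp
  have hrF : r = (fun u => Pon / θ * log (onOffRatio p11 p22 u)) ∘ g := funext hr
  rw [hrF]
  exact (hF.comp_hasDerivWithinAt 0 hgderiv).congr_deriv (by ring)

/-- If `g` is continuous on a right-neighborhood of 0, differentiable
at 0 (from the right, with derivative `g'`), and `g 0 = 1`, then the discrete-Markov
throughput map
`r(x) = (P_on/θ)·log[(1 − p11·g(x))/((1 − p11 − p22)·g(x)² + p22·g(x))]`
is differentiable at 0 with `r'(0) = −g'(0)/θ`. -/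
theorem discrete_markov_throughput_first_derivative
    (θ p11 p22 : ℝ) (hθ : 0 < θ)
    (hp11 : p11 ∈ Set.Ico (0 : ℝ) 1) (hp22 : p22 ∈ Set.Icc (0 : ℝ) 1)
    (Pon : ℝ) (hPon : Pon = (1 - p11) / (2 - p11 - p22))
    (g : ℝ → ℝ) (g' : ℝ)
    (ε : ℝ) (hε : 0 < ε) (hgcont : ContinuousOn g (Set.Ico 0 ε))
    (hg0 : g 0 = 1)
    (hgderiv : HasDerivWithinAt g g' (Set.Ici 0) 0)
    (r : ℝ → ℝ)
    (hr : ∀ x, r x = (Pon / θ) * Real.log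
      ((1 - p11 * g x) / ((1 - p11 - p22) * (g x) ^ 2 + p22 * g x))) :
    HasDerivWithinAt r (-g' / θ) (Set.Ici 0) 0 :=
  discrete_markov_throughput_first_derivative_general θ p11 p22 hp11 hp22 Pon hPon g g' hg0 hgderiv
    r hr
end

section
/- If g is continuous on a right-neighborhood of 0, differentiable at 0, and g(0) = 1, then the Markov-fluid throughput map r(x) = −(P_on/θ)·((α + β − log_e g(x))/(α − log_e g(x)))·log_e g(x) is differentiable at 0 with r'(0) = −g'(0)/θ. -/
open Real Set

/-!
Since `g 0 = 1`, `x ↦ log (g x)` vanishes at `0` with right derivative `g'`, and `r` is the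
composite of it with `q u = -(Pon/θ) · ((α + β - u)/(α - u)) · u`. As `q` is `u` times a factor
smooth near `0`, `q'(0)` is that factor at `0`, namely `-(Pon/θ) · (α + β)/α = -1/θ`; the chain
rule gives `r'(0) = -g'/θ`.
-/

theorem hasDerivAt_const_mul_div_sub_mul_zero {c a b : ℝ} (ha : a ≠ 0) :
    HasDerivAt (fun u : ℝ => c * ((a + b - u) / (a - u)) * u) (c * ((a + b) / a)) 0 := by
  have hnum : HasDerivAt (fun u : ℝ => a + b - u) (-1) 0 := by
    simpa using (hasDerivAt_id (0 : ℝ)).const_sub (a + b)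
  have hden : HasDerivAt (fun u : ℝ => a - u) (-1) 0 := by
    simpa using (hasDerivAt_id (0 : ℝ)).const_sub a
  have hquot := hnum.div hden (by simpa using ha)
  exact (((hquot.const_mul c).mul (hasDerivAt_id 0)).congr_deriv (by simp))

theorem markov_fluid_throughput_first_derivative_general
    (θ α β : ℝ) (hα : 0 < α) (hβ : 0 ≤ β)
    (Pon : ℝ) (hPon : Pon = α / (α + β))
    (g : ℝ → ℝ) (g' : ℝ)
    (hg0 : g 0 = 1)
    (hgderiv : HasDerivWithinAt g g' (Set.Ici 0) 0)
    (r : ℝ → ℝ)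
    (hr : ∀ x, r x = -(Pon / θ) *
      ((α + β - Real.log (g x)) / (α - Real.log (g x))) * Real.log (g x)) :
    HasDerivWithinAt r (-g' / θ) (Set.Ici 0) 0 := by
  have hlog : HasDerivWithinAt (fun x => Real.log (g x)) g' (Set.Ici 0) 0 := by
    simpa [hg0] using hgderiv.log (by simp [hg0])
  have hcomp := (hasDerivAt_const_mul_div_sub_mul_zero (c := -(Pon / θ)) (b := β)
    hα.ne').comp_hasDerivWithinAt_of_eq 0 hlog (by simp [hg0])
  rw [show r = _ from funext hr]
  refine hcomp.congr_deriv ?_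
  have hab : α + β ≠ 0 := by positivity
  rw [hPon]
  field_simp

/-- If `g` is continuous on a right-neighborhood of 0, differentiable
at 0 (from the right, with derivative `g'`), and `g 0 = 1`, then the Markov-fluid
throughput map
`r(x) = −(P_on/θ)·((α + β − log g(x))/(α − log g(x)))·log g(x)`
is differentiable at 0 with `r'(0) = −g'(0)/θ`. -/
theorem markov_fluid_throughput_first_derivative
    (θ α β : ℝ) (hθ : 0 < θ) (hα : 0 < α) (hβ : 0 ≤ β)
    (Pon : ℝ) (hPon : Pon = α / (α + β))
    (g : ℝ → ℝ) (g' : ℝ)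
    (ε : ℝ) (hε : 0 < ε) (hgcont : ContinuousOn g (Set.Ico 0 ε))
    (hg0 : g 0 = 1)
    (hgderiv : HasDerivWithinAt g g' (Set.Ici 0) 0)
    (r : ℝ → ℝ)
    (hr : ∀ x, r x = -(Pon / θ) *
      ((α + β - Real.log (g x)) / (α - Real.log (g x))) * Real.log (g x)) :
    HasDerivWithinAt r (-g' / θ) (Set.Ici 0) 0 :=
  markov_fluid_throughput_first_derivative_general θ α β hα hβ Pon hPon g g' hg0 hgderiv r hr
end

section
/- When data arrivals form an ON–OFF discrete-time Markov process, the minimum energy per bit for confidential message transmission to receiver 1 is the same as for a constant-rate source: lim_{snr→0⁺} (δ·P(z1 ≥ z2)·snr)/r_avg(snr) = P(z1 ≥ z2)·log_e 2 / E[(z1 − z2)·1{z1 ≥ z2}], independent of θ, p11, p22. -/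
/-! Since `ravg 0 = 0`, the limit is `P(z1 ≥ z2) · δ / ravg'(0⁺)`, so it suffices to show
that `ravg` has right derivative `δ E / log 2` at `0`, where `E = E[(z1 - z2)⁺]`. For `snr ≥ 0`
the rate `R1 snr` lies between `0` and `δ snr (z1 - z2)⁺ / log 2`, so dominated convergence
gives `g1 0 = 1` and `g1'(0⁺) = -θ δ E / log 2`. The Markov function
`g ↦ log ((1 - p11 g) / ((1 - p11 - p22) g² + p22 g))` vanishes at `g = 1` with derivative
`-(2 - p11 - p22) / (1 - p11) = -1 / Pon`, and the chain rule cancels `Pon` and `θ`. -/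

open MeasureTheory Filter Set Topology

theorem hasDerivWithinAt_integral_of_dominated_slope_s9 {Ω : Type*} [MeasurableSpace Ω]
    {μ : Measure Ω} {F : ℝ → Ω → ℝ} {F' G : Ω → ℝ} {s : Set ℝ} {x₀ : ℝ}
    (hF_meas : ∀ᶠ x in 𝓝[s] x₀, AEStronglyMeasurable (F x) μ)
    (hF_int : Integrable (F x₀) μ)
    (h_bound : ∀ᶠ x in 𝓝[s] x₀, ∀ᵐ ω ∂μ, ‖F x ω - F x₀ ω‖ ≤ |x - x₀| * G ω)
    (hG : Integrable G μ)
    (h_diff : ∀ᵐ ω ∂μ, HasDerivWithinAt (F · ω) (F' ω) s x₀) :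
    HasDerivWithinAt (fun x => ∫ ω, F x ω ∂μ) (∫ ω, F' ω ∂μ) s x₀ := by
  have h_near : ∀ᶠ x in 𝓝[s \ {x₀}] x₀, x ≠ x₀ ∧ AEStronglyMeasurable (F x) μ ∧
      ∀ᵐ ω ∂μ, ‖F x ω - F x₀ ω‖ ≤ |x - x₀| * G ω := by
    have hmono : 𝓝[s \ {x₀}] x₀ ≤ 𝓝[s] x₀ := nhdsWithin_mono _ sdiff_subset
    filter_upwards [self_mem_nhdsWithin, hmono hF_meas, hmono h_bound] with x hx hxm hxb
    exact ⟨hx.2, hxm, hxb⟩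
  have h_slope : ∀ᶠ x in 𝓝[s \ {x₀}] x₀,
      slope (fun x => ∫ ω, F x ω ∂μ) x₀ x = ∫ ω, slope (F · ω) x₀ x ∂μ := by
    filter_upwards [h_near] with x hx
    obtain ⟨-, hxm, hxb⟩ := hx
    have h_int : Integrable (F x) μ := by
      have h_diff_int : Integrable (fun ω => F x ω - F x₀ ω) μ :=
        (hG.const_mul |x - x₀|).mono' (hxm.sub hF_int.1) hxb
      exact (h_diff_int.add hF_int).congr (ae_of_all _ fun ω => by simp)
    simp only [slope_def_field, ← integral_sub h_int hF_int, integral_div]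
  rw [hasDerivWithinAt_iff_tendsto_slope]
  refine Tendsto.congr' (h_slope.mono fun _ h => h.symm)
    (tendsto_integral_filter_of_dominated_convergence G ?_ ?_ hG ?_)
  · filter_upwards [h_near] with x hx
    obtain ⟨-, hxm, -⟩ := hx
    simp only [slope_def_field]
    exact (hxm.sub hF_int.1).mul_const (x - x₀)⁻¹
  · filter_upwards [h_near] with x hx
    obtain ⟨hx, -, hxb⟩ := hx
    filter_upwards [hxb] with ω hω
    rw [slope_def_field, norm_div, Real.norm_eq_abs (x - x₀),
      div_le_iff₀ (abs_pos.2 (sub_ne_zero.2 hx))]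
    linarith
  · filter_upwards [h_diff] with ω hω
    exact hasDerivWithinAt_iff_tendsto_slope.mp hω

theorem tendsto_mul_div_of_hasDerivWithinAt {r : ℝ → ℝ} {r' : ℝ}
    (hr : HasDerivWithinAt r r' (Ioi 0) 0) (h0 : r 0 = 0) (hr' : r' ≠ 0) (c : ℝ) :
    Tendsto (fun x => c * x / r x) (𝓝[>] 0) (𝓝 (c / r')) := by
  rw [hasDerivWithinAt_iff_tendsto_slope' self_notMem_Ioi] at hr
  refine (tendsto_const_nhds.div hr hr').congr' ?_
  filter_upwards [self_mem_nhdsWithin] with x hx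
  rw [Pi.div_apply, slope_def_field, h0, sub_zero, sub_zero, div_div_eq_mul_div]

theorem abs_exp_neg_sub_one_le {x : ℝ} (hx : 0 ≤ x) : |Real.exp (-x) - 1| ≤ x := by
  rw [abs_sub_comm, abs_of_nonneg (by simpa using hx)]
  linarith [Real.one_sub_le_exp_neg x]

theorem hasDerivAt_logb_div_one_add_mul (c a b : ℝ) :
    HasDerivAt (fun s => Real.logb 2 ((1 + c * s * a) / (1 + c * s * b)))
      (c * (a - b) / Real.log 2) 0 := by
  have h_lin : ∀ d : ℝ, HasDerivAt (fun s => 1 + c * s * d) (c * d) 0 := fun d => by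
    simpa [mul_comm, mul_left_comm] using ((hasDerivAt_id' (0 : ℝ)).const_mul (c * d)).const_add 1
  have h := (((h_lin a).fun_div (h_lin b) (by simp)).log (by simp)).div_const (Real.log 2)
  simp only [Real.logb]
  exact h.congr_deriv (by simp; ring)

theorem logb_div_one_add_mul_mem_Icc {t a b : ℝ} (ht : 0 ≤ t) (hb : 0 ≤ b) (hba : b ≤ a) :
    Real.logb 2 ((1 + t * a) / (1 + t * b)) ∈ Icc 0 (t * (a - b) / Real.log 2) := by
  have h_den : 1 ≤ 1 + t * b := by nlinarith
  have h_ratio : 1 ≤ (1 + t * a) / (1 + t * b) := (one_le_div (by linarith)).2 (by nlinarith)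
  refine ⟨Real.logb_nonneg one_lt_two h_ratio, ?_⟩
  rw [Real.logb]
  gcongr
  calc Real.log ((1 + t * a) / (1 + t * b))
      ≤ (1 + t * a) / (1 + t * b) - 1 := Real.log_le_sub_one_of_pos (by linarith)
    _ = t * (a - b) / (1 + t * b) := by field_simp; ring
    _ ≤ t * (a - b) := div_le_self (by nlinarith) h_den

theorem integrable_ite_le_sub {Ω : Type*} [MeasurableSpace Ω] {μ : Measure Ω}
    [IsFiniteMeasure μ] {z1 z2 : Ω → ℝ} (hz1 : Measurable z1) (hz2 : Measurable z2)
    (hz2nn : ∀ ω, 0 ≤ z2 ω) {M : ℝ} (hz1b : ∀ ω, z1 ω ≤ M) :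
    Integrable (fun ω => if z2 ω ≤ z1 ω then z1 ω - z2 ω else 0) μ := by
  refine Integrable.of_bound ((Measurable.ite (measurableSet_le hz2 hz1) (hz1.sub hz2)
    measurable_const).aestronglyMeasurable) |M| (ae_of_all _ fun ω => ?_)
  split_ifs with h
  · rw [Real.norm_of_nonneg (sub_nonneg.2 h)]
    linarith [hz2nn ω, hz1b ω, le_abs_self M]
  · simp

theorem integral_ite_le_sub_pos {Ω : Type*} [MeasurableSpace Ω] {μ : Measure Ω}
    {z1 z2 : Ω → ℝ} (hf : Integrable (fun ω => if z2 ω ≤ z1 ω then z1 ω - z2 ω else 0) μ)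
    (hpos : 0 < μ {ω | z2 ω < z1 ω}) :
    0 < ∫ ω, (if z2 ω ≤ z1 ω then z1 ω - z2 ω else 0) ∂μ := by
  have hf_nonneg : ∀ ω, 0 ≤ if z2 ω ≤ z1 ω then z1 ω - z2 ω else 0 := fun ω => by
    split_ifs with h <;> linarith
  rw [integral_pos_iff_support_of_nonneg hf_nonneg hf]
  refine hpos.trans_le (measure_mono fun ω (h : z2 ω < z1 ω) => ?_)
  simp [h.le, sub_eq_zero, h.ne']

theorem hasDerivWithinAt_integral_exp_neg_secrecyRate {Ω : Type*} [MeasurableSpace Ω]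
    (μ : Measure Ω) [IsFiniteMeasure μ] {z1 z2 : Ω → ℝ} (hz1 : Measurable z1)
    (hz2 : Measurable z2) (hz2nn : ∀ ω, 0 ≤ z2 ω)
    (hf : Integrable (fun ω => if z2 ω ≤ z1 ω then z1 ω - z2 ω else 0) μ)
    {θ δ : ℝ} (hθ : 0 ≤ θ) (hδ : 0 ≤ δ) :
    HasDerivWithinAt
      (fun s => ∫ ω, Real.exp (-θ * if z2 ω ≤ z1 ω then
        Real.logb 2 ((1 + δ * s * z1 ω) / (1 + δ * s * z2 ω)) else 0) ∂μ)
      (-(θ * δ / Real.log 2) * ∫ ω, (if z2 ω ≤ z1 ω then z1 ω - z2 ω else 0) ∂μ) (Ioi 0) 0 := by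
  have h_meas : ∀ s : ℝ, Measurable fun ω => Real.exp (-θ * if z2 ω ≤ z1 ω then
      Real.logb 2 ((1 + δ * s * z1 ω) / (1 + δ * s * z2 ω)) else 0) := fun s =>
    ((Measurable.ite (measurableSet_le hz2 hz1) (by unfold Real.logb; fun_prop)
      measurable_const).const_mul (-θ)).exp
  rw [← integral_const_mul]
  refine hasDerivWithinAt_integral_of_dominated_slope_s9 (G := fun ω =>
      θ * δ / Real.log 2 * if z2 ω ≤ z1 ω then z1 ω - z2 ω else 0)
    (Eventually.of_forall fun s => (h_meas s).aestronglyMeasurable) (by simp) ?_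
    (hf.const_mul _) (ae_of_all _ fun ω => ?_)
  · filter_upwards [self_mem_nhdsWithin] with s (hs : 0 < s)
    refine ae_of_all _ fun ω => ?_
    split_ifs with h
    · obtain ⟨hL0, hL⟩ := logb_div_one_add_mul_mem_Icc (mul_nonneg hδ hs.le) (hz2nn ω) h
      calc ‖Real.exp (-θ * Real.logb 2 ((1 + δ * s * z1 ω) / (1 + δ * s * z2 ω)))
            - Real.exp (-θ * Real.logb 2 ((1 + δ * 0 * z1 ω) / (1 + δ * 0 * z2 ω)))‖
          ≤ θ * Real.logb 2 ((1 + δ * s * z1 ω) / (1 + δ * s * z2 ω)) := by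
            simpa [neg_mul] using abs_exp_neg_sub_one_le (mul_nonneg hθ hL0)
        _ ≤ θ * (δ * s * (z1 ω - z2 ω) / Real.log 2) := by gcongr
        _ = |s - 0| * (θ * δ / Real.log 2 * (z1 ω - z2 ω)) := by
            rw [sub_zero, abs_of_pos hs]; ring
    · simp
  · split_ifs with h
    · exact (((hasDerivAt_logb_div_one_add_mul δ (z1 ω) (z2 ω)).const_mul (-θ)).exp.congr_deriv
        (by simp; ring)).hasDerivWithinAt
    · simpa using hasDerivWithinAt_const (0 : ℝ) (Ioi 0) (1 : ℝ)

theorem hasDerivAt_log_markov_at_one (p q : ℝ) (hp : p ≠ 1) :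
    HasDerivAt (fun g => Real.log ((1 - p * g) / ((1 - p - q) * g ^ 2 + q * g)))
      (-(2 - p - q) / (1 - p)) 1 := by
  have hp' : 1 - p ≠ 0 := sub_ne_zero.2 (Ne.symm hp)
  have h_num : HasDerivAt (fun g : ℝ => 1 - p * g) (-p) 1 := by
    simpa using ((hasDerivAt_id (1 : ℝ)).const_mul p).const_sub 1
  have h_den : HasDerivAt (fun g : ℝ => (1 - p - q) * g ^ 2 + q * g) (2 - 2 * p - q) 1 := by
    refine (((hasDerivAt_pow 2 (1 : ℝ)).const_mul (1 - p - q)).add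
      ((hasDerivAt_id' (1 : ℝ)).const_mul q)).congr_deriv ?_
    norm_num
    ring
  have h_den_one : (1 - p - q) * (1 : ℝ) ^ 2 + q * 1 = 1 - p := by ring
  have h_log := (h_num.fun_div h_den (by rw [h_den_one]; exact hp')).log
    (by rw [h_den_one, mul_one, div_self hp']; exact one_ne_zero)
  convert h_log using 1
  rw [h_den_one, mul_one, div_self hp']
  field_simp
  ring

theorem minimum_energy_per_bit_confidential_discrete_markov_general
    {Ω : Type*} [MeasurableSpace Ω] (μ : Measure Ω) [IsProbabilityMeasure μ]
    (z1 z2 : Ω → ℝ) (hz1m : Measurable z1) (hz2m : Measurable z2)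
    (hz2nn : ∀ ω, 0 ≤ z2 ω)
    (M : ℝ) (hz1b : ∀ ω, z1 ω ≤ M)
    (hpos : 0 < (μ {ω | z2 ω < z1 ω}).toReal)
    (θ δ p11 p22 : ℝ) (hθ : 0 < θ) (hδ0 : 0 < δ)
    (hp11 : p11 ∈ Set.Ioo (0 : ℝ) 1) (hp22 : p22 ∈ Set.Ioo (0 : ℝ) 1)
    (Pon : ℝ) (hPon : Pon = (1 - p11) / (2 - p11 - p22))
    (R1 : ℝ → Ω → ℝ)
    (hR1 : ∀ snr ω, R1 snr ω =
      if z2 ω ≤ z1 ω then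
        Real.logb 2 ((1 + δ * snr * z1 ω) / (1 + δ * snr * z2 ω)) else 0)
    (g1 : ℝ → ℝ) (hg1 : ∀ snr, g1 snr = ∫ ω, Real.exp (-θ * R1 snr ω) ∂μ)
    (ravg : ℝ → ℝ)
    (hravg : ∀ snr, ravg snr = (Pon / θ) * Real.log
      ((1 - p11 * g1 snr) / ((1 - p11 - p22) * (g1 snr) ^ 2 + p22 * g1 snr))) :
    Filter.Tendsto
      (fun snr => (δ * (μ {ω | z2 ω ≤ z1 ω}).toReal * snr) / ravg snr)
      (nhdsWithin 0 (Set.Ioi 0))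
      (nhds ((μ {ω | z2 ω ≤ z1 ω}).toReal * Real.log 2 /
        ∫ ω, (if z2 ω ≤ z1 ω then z1 ω - z2 ω else 0) ∂μ)) := by
  have hf_int := integrable_ite_le_sub (μ := μ) hz1m hz2m hz2nn hz1b
  have hE := integral_ite_le_sub_pos hf_int (ENNReal.toReal_pos_iff.1 hpos).1
  set E := ∫ ω, (if z2 ω ≤ z1 ω then z1 ω - z2 ω else 0) ∂μ
  have hg1_zero : g1 0 = 1 := by simp [hg1, hR1]
  have hg1_deriv : HasDerivWithinAt g1 (-(θ * δ / Real.log 2) * E) (Ioi 0) 0 :=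
    (hasDerivWithinAt_integral_exp_neg_secrecyRate μ hz1m hz2m hz2nn hf_int hθ.le
      hδ0.le).congr (fun s _ => by simp only [hg1, hR1]) (by simp only [hg1, hR1])
  have h1p : 1 - p11 ≠ 0 := by linarith [hp11.2]
  have h2p : 2 - p11 - p22 ≠ 0 := by linarith [hp11.2, hp22.2]
  have hravg_deriv : HasDerivWithinAt ravg (δ * E / Real.log 2) (Ioi 0) 0 := by
    have h_comp := (hasDerivAt_log_markov_at_one p11 p22 hp11.2.ne).comp_hasDerivWithinAt_of_eq
      0 hg1_deriv hg1_zero.symm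
    refine ((h_comp.const_mul (Pon / θ)).congr (fun s _ => hravg s) (hravg 0)).congr_deriv ?_
    rw [hPon]
    field_simp
  have hravg_zero : ravg 0 = 0 := by
    rw [hravg, hg1_zero]
    simp [show 1 - p11 - p22 + p22 = 1 - p11 by ring, div_self h1p]
  convert tendsto_mul_div_of_hasDerivWithinAt hravg_deriv hravg_zero (by positivity) _ using 2
  field_simp

/-- When data arrivals form an ON–OFF discrete-time Markov process,
the minimum energy per bit for confidential message transmission to receiver 1 is the
same as for a constant-rate source:
`lim_{snr→0⁺} (δ·P(z1 ≥ z2)·snr)/r_avg(snr) = P(z1 ≥ z2)·log 2 / E[(z1 − z2)·1{z1 ≥ z2}]`,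
independent of `θ`, `p11`, `p22`. -/
theorem minimum_energy_per_bit_confidential_discrete_markov
    {Ω : Type*} [MeasurableSpace Ω] (μ : Measure Ω) [IsProbabilityMeasure μ]
    (z1 z2 : Ω → ℝ) (hz1m : Measurable z1) (hz2m : Measurable z2)
    (hz1nn : ∀ ω, 0 ≤ z1 ω) (hz2nn : ∀ ω, 0 ≤ z2 ω)
    (M : ℝ) (hz1b : ∀ ω, z1 ω ≤ M) (hz2b : ∀ ω, z2 ω ≤ M)
    (hpos : 0 < (μ {ω | z2 ω < z1 ω}).toReal)
    (θ δ p11 p22 : ℝ) (hθ : 0 < θ) (hδ0 : 0 < δ) (hδ1 : δ ≤ 1)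
    (hp11 : p11 ∈ Set.Ioo (0 : ℝ) 1) (hp22 : p22 ∈ Set.Ioo (0 : ℝ) 1)
    (Pon : ℝ) (hPon : Pon = (1 - p11) / (2 - p11 - p22))
    (R1 : ℝ → Ω → ℝ)
    (hR1 : ∀ snr ω, R1 snr ω =
      if z2 ω ≤ z1 ω then
        Real.logb 2 ((1 + δ * snr * z1 ω) / (1 + δ * snr * z2 ω)) else 0)
    (g1 : ℝ → ℝ) (hg1 : ∀ snr, g1 snr = ∫ ω, Real.exp (-θ * R1 snr ω) ∂μ)
    (ravg : ℝ → ℝ)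
    (hravg : ∀ snr, ravg snr = (Pon / θ) * Real.log
      ((1 - p11 * g1 snr) / ((1 - p11 - p22) * (g1 snr) ^ 2 + p22 * g1 snr))) :
    Filter.Tendsto
      (fun snr => (δ * (μ {ω | z2 ω ≤ z1 ω}).toReal * snr) / ravg snr)
      (nhdsWithin 0 (Set.Ioi 0))
      (nhds ((μ {ω | z2 ω ≤ z1 ω}).toReal * Real.log 2 /
        ∫ ω, (if z2 ω ≤ z1 ω then z1 ω - z2 ω else 0) ∂μ)) :=
  minimum_energy_per_bit_confidential_discrete_markov_general μ z1 z2 hz1m hz2m hz2nn M hz1b hpos θ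
    δ p11 p22 hθ hδ0 hp11 hp22 Pon hPon R1 hR1 g1 hg1 ravg hravg
end

section
/- When data arrivals form an ON–OFF discrete-time Markov-modulated Poisson process, the minimum energy per bit for confidential message transmission to receiver 1 satisfies lim_{snr→0⁺} (δ·P(z1 ≥ z2)·snr)/r_avg(snr) = (e^{θ} − 1)·P(z1 ≥ z2)·log_e 2 / (θ·E[(z1 − z2)·1{z1 ≥ z2}]); in particular it exceeds the constant-rate value by the factor (e^{θ} − 1)/θ and grows with the QoS exponent θ. -/
/-!
At `snr = 0` every rate vanishes, so `g1 0 = 1` and `r_avg 0 = 0`, and the limit is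
`δ P(z1 ≥ z2) / r_avg'(0⁺)`. Since `1 - e^{-θ R} ≤ θ R` and `log x ≤ x - 1`, the difference
quotients of `e^{-θ R1}` are bounded by `θ δ M / log 2`, so dominated convergence gives
`g1'(0⁺) = -θ δ E[(z1 - z2)⁺] / log 2`. The logarithm in `r_avg` has derivative
`-(2 - p11 - p22)/(1 - p11) = -1/P_on` at `g = 1`, so the chain rule gives
`r_avg'(0⁺) = θ δ E[(z1 - z2)⁺] / ((e^θ - 1) log 2)`. Finally `(e^θ - 1)/θ` is the slope of the
strictly convex function `exp` between `0` and `θ`.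
-/

open MeasureTheory ProbabilityTheory Filter Set Topology

theorem hasDerivWithinAt_integral_Ioi_of_slope_le {Ω : Type*} [MeasurableSpace Ω]
    {μ : Measure Ω} [IsFiniteMeasure μ] {F : ℝ → Ω → ℝ} {F' : Ω → ℝ} {x₀ C : ℝ}
    (hF₀ : Integrable (F x₀) μ) (hF_meas : ∀ x > x₀, AEStronglyMeasurable (F x) μ)
    (h_bound : ∀ x > x₀, ∀ ω, |F x ω - F x₀ ω| ≤ C * (x - x₀))
    (h_diff : ∀ ω, HasDerivWithinAt (F · ω) (F' ω) (Ioi x₀) x₀) :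
    HasDerivWithinAt (fun x => ∫ ω, F x ω ∂μ) (∫ ω, F' ω ∂μ) (Ioi x₀) x₀ := by
  have h_int : ∀ x > x₀, Integrable (fun ω => F x ω - F x₀ ω) μ := fun x hx =>
    (integrable_const (C * (x - x₀))).mono' ((hF_meas x hx).sub hF₀.aestronglyMeasurable)
      (ae_of_all _ (h_bound x hx))
  have h_slope : ∀ x > x₀,
      ∫ ω, slope (F · ω) x₀ x ∂μ = slope (fun x => ∫ ω, F x ω ∂μ) x₀ x := fun x hx => by
    have hFx : Integrable (F x) μ := by simpa [Pi.add_def] using (h_int x hx).add hF₀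
    simp only [slope_def_field]
    rw [integral_div, integral_sub hFx hF₀]
  rw [hasDerivWithinAt_iff_tendsto_slope' self_notMem_Ioi]
  refine Tendsto.congr' ?_ (tendsto_integral_filter_of_dominated_convergence
    (F := fun x ω => slope (F · ω) x₀ x) (fun _ => C) ?_ ?_
    (integrable_const C) (ae_of_all _ fun ω => ?_))
  · filter_upwards [self_mem_nhdsWithin] with x hx using h_slope x hx
  · filter_upwards [self_mem_nhdsWithin] with x hx
    simpa only [slope_def_field] using (h_int x hx).div_const (x - x₀) |>.aestronglyMeasurable
  · filter_upwards [self_mem_nhdsWithin] with x (hx : x₀ < x)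
    refine ae_of_all _ fun ω => ?_
    rw [slope_def_field, Real.norm_eq_abs, abs_div, abs_of_pos (sub_pos.2 hx),
      div_le_iff₀ (sub_pos.2 hx)]
    exact h_bound x hx ω
  · exact (hasDerivWithinAt_iff_tendsto_slope' self_notMem_Ioi).1 (h_diff ω)

theorem HasDerivWithinAt.tendsto_const_mul_div_Ioi {f : ℝ → ℝ} {f' x₀ : ℝ}
    (hf : HasDerivWithinAt f f' (Ioi x₀) x₀) (hf₀ : f x₀ = 0) (hf' : f' ≠ 0) (c : ℝ) :
    Tendsto (fun x => c * (x - x₀) / f x) (𝓝[>] x₀) (𝓝 (c / f')) := by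
  refine (tendsto_const_nhds.div ((hasDerivWithinAt_iff_tendsto_slope' self_notMem_Ioi).1 hf)
    hf').congr fun x => ?_
  rw [Pi.div_apply, slope_def_field, hf₀, sub_zero, div_div_eq_mul_div]

theorem strictMonoOn_exp_sub_one_div : StrictMonoOn (fun t : ℝ => (Real.exp t - 1) / t) (Ioi 0) :=
  fun x hx y hy hxy => by
    simpa using strictConvexOn_exp.secant_strict_mono (mem_univ 0) (mem_univ x) (mem_univ y)
      hx.ne' hy.ne' hxy

theorem one_lt_exp_sub_one_div {t : ℝ} (ht : 0 < t) : 1 < (Real.exp t - 1) / t := by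
  rw [one_lt_div ht]
  linarith [Real.add_one_lt_exp ht.ne']

noncomputable def secrecyRate (δ snr a b : ℝ) : ℝ :=
  if b ≤ a then Real.logb 2 ((1 + δ * snr * a) / (1 + δ * snr * b)) else 0

section secrecyRate

variable {δ snr a b : ℝ}

@[simp]
theorem secrecyRate_at_zero (δ a b : ℝ) : secrecyRate δ 0 a b = 0 := by
  simp [secrecyRate]

theorem secrecyRate_nonneg (hδ : 0 ≤ δ) (hsnr : 0 ≤ snr) (hb : 0 ≤ b) :
    0 ≤ secrecyRate δ snr a b := by
  unfold secrecyRate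
  split_ifs with hba
  · refine Real.logb_nonneg one_lt_two ((one_le_div (by positivity)).2 ?_)
    gcongr
  · rfl

theorem secrecyRate_le (hδ : 0 ≤ δ) (hsnr : 0 ≤ snr) (hb : 0 ≤ b) :
    secrecyRate δ snr a b ≤ δ * snr * (if b ≤ a then a - b else 0) / Real.log 2 := by
  unfold secrecyRate
  split_ifs with hba
  · have hv : 0 < 1 + δ * snr * b := by positivity
    have h_log : Real.log ((1 + δ * snr * a) / (1 + δ * snr * b)) ≤ δ * snr * (a - b) :=
      calc Real.log ((1 + δ * snr * a) / (1 + δ * snr * b))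
          ≤ (1 + δ * snr * a) / (1 + δ * snr * b) - 1 :=
            Real.log_le_sub_one_of_pos (div_pos (by nlinarith [mul_nonneg hδ hsnr]) hv)
        _ = δ * snr * (a - b) / (1 + δ * snr * b) := by field_simp; ring
        _ ≤ δ * snr * (a - b) :=
            div_le_self (mul_nonneg (by positivity) (sub_nonneg.2 hba))
              (by nlinarith [mul_nonneg hδ hsnr])
    exact div_le_div_of_nonneg_right h_log (Real.log_nonneg one_le_two)
  · simp

theorem hasDerivAt_exp_neg_mul_secrecyRate (θ δ a b : ℝ) :
    HasDerivAt (fun snr => Real.exp (-θ * secrecyRate δ snr a b))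
      (-(θ * δ / Real.log 2) * (if b ≤ a then a - b else 0)) 0 := by
  unfold secrecyRate
  split_ifs with hba
  · have h_ratio :
        HasDerivAt (fun snr => (1 + δ * snr * a) / (1 + δ * snr * b)) (δ * (a - b)) 0 := by
      have hnum : HasDerivAt (fun snr => 1 + δ * snr * a) (δ * a) 0 := by
        simpa using ((hasDerivAt_id (0 : ℝ)).const_mul δ).mul_const a |>.const_add 1
      have hden : HasDerivAt (fun snr => 1 + δ * snr * b) (δ * b) 0 := by
        simpa using ((hasDerivAt_id (0 : ℝ)).const_mul δ).mul_const b |>.const_add 1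
      exact (hnum.fun_div hden (by simp)).congr_deriv (by simp; ring)
    exact (((h_ratio.log (by simp)).div_const (Real.log 2)).const_mul (-θ)).exp.congr_deriv
      (by simp; ring)
  · simp [hasDerivAt_const]

end secrecyRate

noncomputable def mmppLogRatio (p11 p22 g : ℝ) : ℝ :=
  Real.log ((1 - p11 * g) / ((1 - p11 - p22) * g ^ 2 + p22 * g))

section mmppLogRatio

variable {p11 : ℝ} (p22 : ℝ)

theorem mmppLogRatio_one (hp11 : p11 ≠ 1) : mmppLogRatio p11 p22 1 = 0 := by
  rw [mmppLogRatio, mul_one, one_pow, mul_one, mul_one, sub_add_cancel,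
    div_self (sub_ne_zero.2 hp11.symm), Real.log_one]

theorem hasDerivAt_mmppLogRatio_one (hp11 : p11 ≠ 1) :
    HasDerivAt (mmppLogRatio p11 p22) ((p11 + p22 - 2) / (1 - p11)) 1 := by
  have h1 : (1 : ℝ) - p11 ≠ 0 := sub_ne_zero.2 hp11.symm
  have hnum : HasDerivAt (fun g : ℝ => 1 - p11 * g) (-p11) 1 := by
    simpa using ((hasDerivAt_id (1 : ℝ)).const_mul p11).const_sub 1
  have hden : HasDerivAt (fun g : ℝ => (1 - p11 - p22) * g ^ 2 + p22 * g)
      ((1 - p11 - p22) * 2 + p22) 1 := by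
    simpa using ((hasDerivAt_pow 2 (1 : ℝ)).const_mul (1 - p11 - p22)).fun_add
      ((hasDerivAt_id (1 : ℝ)).const_mul p22)
  have hden1 : (1 - p11 - p22) * (1 : ℝ) ^ 2 + p22 * 1 = 1 - p11 := by ring
  refine ((hnum.fun_div hden (by rwa [hden1])).log (by simp [h1])).congr_deriv ?_
  rw [hden1]
  field_simp
  ring

end mmppLogRatio

theorem ite_sub_zero_le {a b M : ℝ} (hb : 0 ≤ b) (ha : a ≤ M) (hbM : b ≤ M) :
    (if b ≤ a then a - b else 0) ≤ M := by
  split_ifs <;> linarith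

section Channel

variable {Ω : Type*} [MeasurableSpace Ω] {μ : Measure Ω} {z1 z2 : Ω → ℝ} {M : ℝ}

theorem integral_ite_sub_pos_s10 [IsFiniteMeasure μ] (hz1m : Measurable z1) (hz2m : Measurable z2)
    (hz2nn : ∀ ω, 0 ≤ z2 ω) (hz1b : ∀ ω, z1 ω ≤ M) (hz2b : ∀ ω, z2 ω ≤ M)
    (hpos : 0 < μ {ω | z2 ω < z1 ω}) :
    0 < ∫ ω, (if z2 ω ≤ z1 ω then z1 ω - z2 ω else 0) ∂μ := by
  have h_nonneg : 0 ≤ fun ω => if z2 ω ≤ z1 ω then z1 ω - z2 ω else 0 := fun ω => by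
    simp only [Pi.zero_apply]
    split_ifs with h <;> linarith
  have h_int : Integrable (fun ω => if z2 ω ≤ z1 ω then z1 ω - z2 ω else 0) μ :=
    .of_bound (Measurable.ite (measurableSet_le hz2m hz1m) (hz1m.sub hz2m)
      measurable_const).aestronglyMeasurable M (ae_of_all _ fun ω => by
        rw [Real.norm_of_nonneg (h_nonneg ω)]
        exact ite_sub_zero_le (hz2nn ω) (hz1b ω) (hz2b ω))
  refine (integral_pos_iff_support_of_nonneg h_nonneg h_int).2 (hpos.trans_le (measure_mono ?_))
  intro ω (hω : z2 ω < z1 ω)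
  simp [hω.le, sub_eq_zero, hω.ne']

theorem hasDerivWithinAt_integral_exp_neg_mul_secrecyRate [IsFiniteMeasure μ]
    (hz1m : Measurable z1) (hz2m : Measurable z2) (hz2nn : ∀ ω, 0 ≤ z2 ω)
    (hz1b : ∀ ω, z1 ω ≤ M) (hz2b : ∀ ω, z2 ω ≤ M) {θ δ : ℝ} (hθ : 0 ≤ θ) (hδ : 0 ≤ δ) :
    HasDerivWithinAt (fun snr => ∫ ω, Real.exp (-θ * secrecyRate δ snr (z1 ω) (z2 ω)) ∂μ)
      (-(θ * δ / Real.log 2) * ∫ ω, (if z2 ω ≤ z1 ω then z1 ω - z2 ω else 0) ∂μ) (Ioi 0) 0 := by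
  rw [← integral_const_mul]
  refine hasDerivWithinAt_integral_Ioi_of_slope_le (C := θ * δ * M / Real.log 2) ?_ ?_ ?_
    fun ω => (hasDerivAt_exp_neg_mul_secrecyRate θ δ (z1 ω) (z2 ω)).hasDerivWithinAt
  · simp
  · intro snr _
    refine Measurable.aestronglyMeasurable ?_
    unfold secrecyRate Real.logb
    exact ((Measurable.ite (measurableSet_le hz2m hz1m) (by fun_prop) measurable_const).const_mul
      (-θ)).exp
  · intro snr (hsnr : 0 < snr) ω
    have hR_nonneg := secrecyRate_nonneg (a := z1 ω) hδ hsnr.le (hz2nn ω)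
    have hR_le := secrecyRate_le (a := z1 ω) hδ hsnr.le (hz2nn ω)
    have h_ite := ite_sub_zero_le (hz2nn ω) (hz1b ω) (hz2b ω)
    have h_exp_le : Real.exp (-θ * secrecyRate δ snr (z1 ω) (z2 ω)) ≤ 1 :=
      Real.exp_le_one_iff.2 (by nlinarith)
    rw [secrecyRate_at_zero, mul_zero, Real.exp_zero, sub_zero,
      abs_of_nonpos (sub_nonpos.2 h_exp_le), neg_sub]
    calc 1 - Real.exp (-θ * secrecyRate δ snr (z1 ω) (z2 ω))
        ≤ θ * secrecyRate δ snr (z1 ω) (z2 ω) := by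
          linarith [Real.add_one_le_exp (-θ * secrecyRate δ snr (z1 ω) (z2 ω))]
      _ ≤ θ * (δ * snr * M / Real.log 2) := by
          gcongr
          exact hR_le.trans (by gcongr)
      _ = θ * δ * M / Real.log 2 * snr := by ring

end Channel

theorem minimum_energy_per_bit_confidential_discrete_MMPP_general
    {Ω : Type*} [MeasurableSpace Ω] (μ : Measure Ω) [IsProbabilityMeasure μ]
    (z1 z2 : Ω → ℝ) (hz1m : Measurable z1) (hz2m : Measurable z2)
    (hz2nn : ∀ ω, 0 ≤ z2 ω)
    (M : ℝ) (hz1b : ∀ ω, z1 ω ≤ M) (hz2b : ∀ ω, z2 ω ≤ M)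
    (hpos : 0 < (μ {ω | z2 ω < z1 ω}).toReal)
    (θ δ p11 p22 : ℝ) (hθ : 0 < θ) (hδ0 : 0 < δ)
    (hp11 : p11 ∈ Set.Ioo (0 : ℝ) 1) (hp22 : p22 ∈ Set.Ioo (0 : ℝ) 1)
    (Pon : ℝ) (hPon : Pon = (1 - p11) / (2 - p11 - p22))
    (R1 : ℝ → Ω → ℝ)
    (hR1 : ∀ snr ω, R1 snr ω =
      if z2 ω ≤ z1 ω then
        Real.logb 2 ((1 + δ * snr * z1 ω) / (1 + δ * snr * z2 ω)) else 0)
    (g1 : ℝ → ℝ) (hg1 : ∀ snr, g1 snr = ∫ ω, Real.exp (-θ * R1 snr ω) ∂μ)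
    (ravg : ℝ → ℝ)
    (hravg : ∀ snr, ravg snr = (Pon / (Real.exp θ - 1)) * Real.log
      ((1 - p11 * g1 snr) / ((1 - p11 - p22) * (g1 snr) ^ 2 + p22 * g1 snr))) :
    Filter.Tendsto
      (fun snr => (δ * (μ {ω | z2 ω ≤ z1 ω}).toReal * snr) / ravg snr)
      (nhdsWithin 0 (Set.Ioi 0))
      (nhds ((Real.exp θ - 1) * (μ {ω | z2 ω ≤ z1 ω}).toReal * Real.log 2 /
        (θ * ∫ ω, (if z2 ω ≤ z1 ω then z1 ω - z2 ω else 0) ∂μ))) ∧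
    (Real.exp θ - 1) * (μ {ω | z2 ω ≤ z1 ω}).toReal * Real.log 2 /
        (θ * ∫ ω, (if z2 ω ≤ z1 ω then z1 ω - z2 ω else 0) ∂μ)
      = ((Real.exp θ - 1) / θ) *
        ((μ {ω | z2 ω ≤ z1 ω}).toReal * Real.log 2 /
          ∫ ω, (if z2 ω ≤ z1 ω then z1 ω - z2 ω else 0) ∂μ) ∧
    1 < (Real.exp θ - 1) / θ ∧
    StrictMonoOn (fun t : ℝ => (Real.exp t - 1) / t) (Set.Ioi 0) := by
  set P := (μ {ω | z2 ω ≤ z1 ω}).toReal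
  set E := ∫ ω, (if z2 ω ≤ z1 ω then z1 ω - z2 ω else 0) ∂μ
  have hE : 0 < E :=
    integral_ite_sub_pos_s10 hz1m hz2m hz2nn hz1b hz2b (ENNReal.toReal_pos_iff.1 hpos).1
  have hp1 : 0 < 1 - p11 := sub_pos.2 hp11.2
  have hp : 0 < 2 - p11 - p22 := by linarith [hp11.2, hp22.2]
  have hexp : 0 < Real.exp θ - 1 := by linarith [Real.add_one_lt_exp hθ.ne']
  have hg : HasDerivWithinAt g1 (-(θ * δ / Real.log 2) * E) (Ioi 0) 0 := by
    rw [funext hg1, funext₂ hR1]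
    exact hasDerivWithinAt_integral_exp_neg_mul_secrecyRate hz1m hz2m hz2nn hz1b hz2b hθ.le hδ0.le
  have hg_zero : g1 0 = 1 := by simp [hg1, hR1]
  have hravg' : ravg = fun snr => Pon / (Real.exp θ - 1) * mmppLogRatio p11 p22 (g1 snr) :=
    funext hravg
  have hlog : HasDerivAt (mmppLogRatio p11 p22) ((p11 + p22 - 2) / (1 - p11)) (g1 0) :=
    hg_zero ▸ hasDerivAt_mmppLogRatio_one p22 hp11.2.ne
  have hr : HasDerivWithinAt ravg (θ * δ * E / ((Real.exp θ - 1) * Real.log 2)) (Ioi 0) 0 := by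
    rw [hravg']
    refine ((hlog.comp_hasDerivWithinAt 0 hg).const_mul _).congr_deriv ?_
    rw [hPon]
    field_simp
    ring
  have hr_zero : ravg 0 = 0 := by
    simp only [hravg', hg_zero, mmppLogRatio_one p22 hp11.2.ne, mul_zero]
  refine ⟨?_, by ring, one_lt_exp_sub_one_div hθ, strictMonoOn_exp_sub_one_div⟩
  convert hr.tendsto_const_mul_div_Ioi hr_zero (by positivity) (δ * P) using 2
  · simp
  · field_simp

/-- When data arrivals form an ON–OFF discrete-time Markov-modulated
Poisson process, the minimum energy per bit for confidential message transmission to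
receiver 1 satisfies
`lim_{snr→0⁺} (δ·P(z1 ≥ z2)·snr)/r_avg(snr)
  = (e^θ − 1)·P(z1 ≥ z2)·log 2 / (θ·E[(z1 − z2)·1{z1 ≥ z2}])`;
in particular it exceeds the constant-rate value by the factor `(e^θ − 1)/θ`, which is
greater than 1 and grows with the QoS exponent `θ`. -/
theorem minimum_energy_per_bit_confidential_discrete_MMPP
    {Ω : Type*} [MeasurableSpace Ω] (μ : Measure Ω) [IsProbabilityMeasure μ]
    (z1 z2 : Ω → ℝ) (hz1m : Measurable z1) (hz2m : Measurable z2)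
    (hz1nn : ∀ ω, 0 ≤ z1 ω) (hz2nn : ∀ ω, 0 ≤ z2 ω)
    (M : ℝ) (hz1b : ∀ ω, z1 ω ≤ M) (hz2b : ∀ ω, z2 ω ≤ M)
    (hpos : 0 < (μ {ω | z2 ω < z1 ω}).toReal)
    (θ δ p11 p22 : ℝ) (hθ : 0 < θ) (hδ0 : 0 < δ) (hδ1 : δ ≤ 1)
    (hp11 : p11 ∈ Set.Ioo (0 : ℝ) 1) (hp22 : p22 ∈ Set.Ioo (0 : ℝ) 1)
    (Pon : ℝ) (hPon : Pon = (1 - p11) / (2 - p11 - p22))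
    (R1 : ℝ → Ω → ℝ)
    (hR1 : ∀ snr ω, R1 snr ω =
      if z2 ω ≤ z1 ω then
        Real.logb 2 ((1 + δ * snr * z1 ω) / (1 + δ * snr * z2 ω)) else 0)
    (g1 : ℝ → ℝ) (hg1 : ∀ snr, g1 snr = ∫ ω, Real.exp (-θ * R1 snr ω) ∂μ)
    (ravg : ℝ → ℝ)
    (hravg : ∀ snr, ravg snr = (Pon / (Real.exp θ - 1)) * Real.log
      ((1 - p11 * g1 snr) / ((1 - p11 - p22) * (g1 snr) ^ 2 + p22 * g1 snr))) :
    Filter.Tendsto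
      (fun snr => (δ * (μ {ω | z2 ω ≤ z1 ω}).toReal * snr) / ravg snr)
      (nhdsWithin 0 (Set.Ioi 0))
      (nhds ((Real.exp θ - 1) * (μ {ω | z2 ω ≤ z1 ω}).toReal * Real.log 2 /
        (θ * ∫ ω, (if z2 ω ≤ z1 ω then z1 ω - z2 ω else 0) ∂μ))) ∧
    (Real.exp θ - 1) * (μ {ω | z2 ω ≤ z1 ω}).toReal * Real.log 2 /
        (θ * ∫ ω, (if z2 ω ≤ z1 ω then z1 ω - z2 ω else 0) ∂μ)
      = ((Real.exp θ - 1) / θ) *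
        ((μ {ω | z2 ω ≤ z1 ω}).toReal * Real.log 2 /
          ∫ ω, (if z2 ω ≤ z1 ω then z1 ω - z2 ω else 0) ∂μ) ∧
    1 < (Real.exp θ - 1) / θ ∧
    StrictMonoOn (fun t : ℝ => (Real.exp t - 1) / t) (Set.Ioi 0) :=
  minimum_energy_per_bit_confidential_discrete_MMPP_general μ z1 z2 hz1m hz2m hz2nn M hz1b hz2b hpos
    θ δ p11 p22 hθ hδ0 hp11 hp22 Pon hPon R1 hR1 g1 hg1 ravg hravg
end

section
/- If g is continuous on a right-neighborhood of 0, twice differentiable at 0, and g(0) = 1, then the discrete-Markov throughput map r(x) = (P_on/θ)·log_e[(1 − p11·g(x))/((1 − p11 − p22)·g(x)² + p22·g(x))] is twice differentiable at 0 with r''(0) = −g''(0)/θ + (1 − η)·(g'(0))²/θ, where η = (1 − p22)(p11 + p22)/((1 − p11)(2 − p11 − p22)). -/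
open Real Set Filter

/-!
Write `N t = 1 - p11 t` and `D t = (1 - p11 - p22) t² + p22 t`, so that
`r = (P_on/θ) · φ ∘ g` with `φ t = log (N t / D t)`. Since `N 1 = D 1 = 1 - p11 > 0`, `φ` is
smooth near `g 0 = 1`, and the second-order chain rule gives
`(φ ∘ g)''(0) = φ''(1) g'(0)² + φ'(1) g''(0)`. A direct computation yields
`P_on φ'(1) = -1` and `P_on φ''(1) = 1 - η`.
-/

open scoped Topology

theorem HasDerivAt.log_div {f₁ f₂ : ℝ → ℝ} {f₁' f₂' t : ℝ} (hf₁ : HasDerivAt f₁ f₁' t)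
    (hf₂ : HasDerivAt f₂ f₂' t) (h₁ : f₁ t ≠ 0) (h₂ : f₂ t ≠ 0) :
    HasDerivAt (fun t => Real.log (f₁ t / f₂ t)) (f₁' / f₁ t - f₂' / f₂ t) t := by
  refine ((hf₁.div hf₂ h₂).log (div_ne_zero h₁ h₂)).congr_deriv ?_
  simp only [Pi.div_apply]
  field_simp

theorem eventually_hasDerivWithinAt_comp {φ φ' g g' : ℝ → ℝ} {s : Set ℝ} {a b : ℝ}
    (hφ : ∀ᶠ t in 𝓝 b, HasDerivAt φ (φ' t) t)
    (hg : ∀ᶠ x in 𝓝[s] a, HasDerivWithinAt g (g' x) s x) (ha : a ∈ s) (hga : g a = b) :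
    ∀ᶠ x in 𝓝[s] a, HasDerivWithinAt (fun x => φ (g x)) (φ' (g x) * g' x) s x := by
  have hg_tendsto : Tendsto g (𝓝[s] a) (𝓝 b) :=
    hga ▸ (hg.self_of_nhdsWithin ha).continuousWithinAt
  filter_upwards [hg, hg_tendsto.eventually hφ] with x hgx hφx
  exact hφx.comp_hasDerivWithinAt x hgx

theorem HasDerivAt.hasDerivWithinAt_comp_mul {φ' g g' : ℝ → ℝ} {φ'' g'' : ℝ} {s : Set ℝ} {a b : ℝ}
    (hφ' : HasDerivAt φ' φ'' b) (hga : g a = b) (hg : HasDerivWithinAt g (g' a) s a)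
    (hg' : HasDerivWithinAt g' g'' s a) :
    HasDerivWithinAt (fun x => φ' (g x) * g' x) (φ'' * g' a ^ 2 + φ' b * g'') s a := by
  subst hga
  refine ((hφ'.comp_hasDerivWithinAt a hg).mul hg').congr_deriv ?_
  rw [Function.comp_apply]
  ring

namespace OnOffSource

variable (p11 p22 : ℝ)

noncomputable def logRatio (t : ℝ) : ℝ :=
  log ((1 - p11 * t) / ((1 - p11 - p22) * t ^ 2 + p22 * t))

noncomputable def logRatioDeriv (t : ℝ) : ℝ :=
  -p11 / (1 - p11 * t) -
    (2 * (1 - p11 - p22) * t + p22) / ((1 - p11 - p22) * t ^ 2 + p22 * t)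

variable {p11}

theorem hasDerivAt_numerator (t : ℝ) : HasDerivAt (fun t => 1 - p11 * t) (-p11) t := by
  simpa using ((hasDerivAt_id t).const_mul p11).const_sub 1

theorem hasDerivAt_denominator (t : ℝ) :
    HasDerivAt (fun t => (1 - p11 - p22) * t ^ 2 + p22 * t) (2 * (1 - p11 - p22) * t + p22) t := by
  refine (((hasDerivAt_pow 2 t).const_mul (1 - p11 - p22)).add
    ((hasDerivAt_id t).const_mul p22)).congr_deriv ?_
  push_cast
  ring

theorem eventually_hasDerivAt_logRatio (hp11 : 1 - p11 ≠ 0) :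
    ∀ᶠ t in 𝓝 1, HasDerivAt (logRatio p11 p22) (logRatioDeriv p11 p22 t) t := by
  have hN : ∀ᶠ t in 𝓝 (1 : ℝ), 1 - p11 * t ≠ 0 :=
    (hasDerivAt_numerator 1).continuousAt.eventually_ne (by simpa using hp11)
  have hD : ∀ᶠ t in 𝓝 (1 : ℝ), (1 - p11 - p22) * t ^ 2 + p22 * t ≠ 0 :=
    (hasDerivAt_denominator p22 1).continuousAt.eventually_ne (by convert hp11 using 1; ring)
  filter_upwards [hN, hD] with t hNt hDt
  exact HasDerivAt.log_div (hasDerivAt_numerator t) (hasDerivAt_denominator p22 t) hNt hDt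

theorem logRatioDeriv_one (hp11 : 1 - p11 ≠ 0) :
    logRatioDeriv p11 p22 1 = -(2 - p11 - p22) / (1 - p11) := by
  simp only [logRatioDeriv, mul_one, one_pow, sub_add_cancel]
  field_simp
  ring

theorem hasDerivAt_logRatioDeriv_one (hp11 : 1 - p11 ≠ 0) :
    HasDerivAt (logRatioDeriv p11 p22)
      (((1 - p11) * (2 - p11 - p22) - (1 - p22) * (p11 + p22)) / (1 - p11) ^ 2) 1 := by
  have hN : 1 - p11 * 1 ≠ 0 := by simpa using hp11
  have hD : (1 - p11 - p22) * 1 ^ 2 + p22 * 1 ≠ 0 := by convert hp11 using 1; ring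
  have hD' : HasDerivAt (fun t => 2 * (1 - p11 - p22) * t + p22) (2 * (1 - p11 - p22)) 1 := by
    simpa using ((hasDerivAt_id (1 : ℝ)).const_mul (2 * (1 - p11 - p22))).add_const p22
  refine (((hasDerivAt_const 1 (-p11)).div (hasDerivAt_numerator 1) hN).sub
    (hD'.div (hasDerivAt_denominator p22 1) hD)).congr_deriv ?_
  simp only [mul_one, one_pow, sub_add_cancel]
  field_simp
  ring

end OnOffSource

open OnOffSource

theorem discrete_markov_throughput_second_derivative_general
    (θ p11 p22 : ℝ)
    (hp11 : p11 ∈ Set.Ico (0 : ℝ) 1) (hp22 : p22 ∈ Set.Icc (0 : ℝ) 1)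
    (Pon : ℝ) (hPon : Pon = (1 - p11) / (2 - p11 - p22))
    (g g' : ℝ → ℝ) (g'' : ℝ)
    (ε : ℝ) (hε : 0 < ε)
    (hg0 : g 0 = 1)
    (hgderiv : ∀ x ∈ Set.Ico 0 ε, HasDerivWithinAt g (g' x) (Set.Ici 0) x)
    (hgderiv2 : HasDerivWithinAt g' g'' (Set.Ici 0) 0)
    (η : ℝ) (hη : η = (1 - p22) * (p11 + p22) / ((1 - p11) * (2 - p11 - p22)))
    (r : ℝ → ℝ)
    (hr : ∀ x, r x = (Pon / θ) * Real.log
      ((1 - p11 * g x) / ((1 - p11 - p22) * (g x) ^ 2 + p22 * g x))) :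
    ∃ r' : ℝ → ℝ,
      (∀ᶠ x in nhdsWithin 0 (Set.Ici 0), HasDerivWithinAt r (r' x) (Set.Ici 0) x) ∧
      HasDerivWithinAt r' (-g'' / θ + (1 - η) * (g' 0) ^ 2 / θ) (Set.Ici 0) 0 := by
  have hb : 1 - p11 ≠ 0 := by linarith [hp11.2]
  have hc : 2 - p11 - p22 ≠ 0 := by linarith [hp11.2, hp22.2]
  have hr_eq : r = fun x => Pon / θ * logRatio p11 p22 (g x) := funext hr
  have hg : ∀ᶠ x in 𝓝[Ici 0] 0, HasDerivWithinAt g (g' x) (Ici 0) x :=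
    eventually_of_mem (Ico_mem_nhdsGE hε) hgderiv
  have hφ := eventually_hasDerivAt_logRatio p22 hb
  have hφ' := hasDerivAt_logRatioDeriv_one p22 hb
  refine ⟨fun x => Pon / θ * (logRatioDeriv p11 p22 (g x) * g' x), ?_, ?_⟩
  · filter_upwards [eventually_hasDerivWithinAt_comp hφ hg self_mem_Ici hg0] with x hx
    exact hr_eq ▸ hx.const_mul _
  · refine ((hφ'.hasDerivWithinAt_comp_mul hg0 (hgderiv 0 ⟨le_rfl, hε⟩) hgderiv2).const_mul
      (Pon / θ)).congr_deriv ?_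
    rw [logRatioDeriv_one p22 hb, hPon, hη]
    field_simp
    ring

/-- If `g` is continuous on a right-neighborhood of 0, twice
differentiable (from the right) at 0, and `g 0 = 1`, then the discrete-Markov throughput
map `r(x) = (P_on/θ)·log[(1 − p11·g(x))/((1 − p11 − p22)·g(x)² + p22·g(x))]` is twice
differentiable at 0 with `r''(0) = −g''(0)/θ + (1 − η)·(g'(0))²/θ`, where
`η = (1 − p22)(p11 + p22)/((1 − p11)(2 − p11 − p22))`. -/
theorem discrete_markov_throughput_second_derivative
    (θ p11 p22 : ℝ) (hθ : 0 < θ)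
    (hp11 : p11 ∈ Set.Ico (0 : ℝ) 1) (hp22 : p22 ∈ Set.Icc (0 : ℝ) 1)
    (Pon : ℝ) (hPon : Pon = (1 - p11) / (2 - p11 - p22))
    (g g' : ℝ → ℝ) (g'' : ℝ)
    (ε : ℝ) (hε : 0 < ε) (hgcont : ContinuousOn g (Set.Ico 0 ε))
    (hg0 : g 0 = 1)
    (hgderiv : ∀ x ∈ Set.Ico 0 ε, HasDerivWithinAt g (g' x) (Set.Ici 0) x)
    (hgderiv2 : HasDerivWithinAt g' g'' (Set.Ici 0) 0)
    (η : ℝ) (hη : η = (1 - p22) * (p11 + p22) / ((1 - p11) * (2 - p11 - p22)))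
    (r : ℝ → ℝ)
    (hr : ∀ x, r x = (Pon / θ) * Real.log
      ((1 - p11 * g x) / ((1 - p11 - p22) * (g x) ^ 2 + p22 * g x))) :
    ∃ r' : ℝ → ℝ,
      (∀ᶠ x in nhdsWithin 0 (Set.Ici 0), HasDerivWithinAt r (r' x) (Set.Ici 0) x) ∧
      HasDerivWithinAt r' (-g'' / θ + (1 - η) * (g' 0) ^ 2 / θ) (Set.Ici 0) 0 :=
  discrete_markov_throughput_second_derivative_general θ p11 p22 hp11 hp22 Pon hPon g g' g'' ε hε
    hg0 hgderiv hgderiv2 η hη r hr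
end

section
/- If g is continuous on a right-neighborhood of 0, twice differentiable at 0, and g(0) = 1, then the Markov-fluid throughput map r(x) = −(P_on/θ)·((α + β − log_e g(x))/(α − log_e g(x)))·log_e g(x) is twice differentiable at 0 with r''(0) = −g''(0)/θ + (1 − ζ)·(g'(0))²/θ, where ζ = 2β/(α(α + β)). -/
open Real Set Filter

/-- If `g` is continuous on a right-neighborhood of 0, twice
differentiable (from the right) at 0, and `g 0 = 1`, then the Markov-fluid throughput
map `r(x) = −(P_on/θ)·((α + β − log g(x))/(α − log g(x)))·log g(x)` is twice
differentiable at 0 with `r''(0) = −g''(0)/θ + (1 − ζ)·(g'(0))²/θ`, where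
`ζ = 2β/(α(α + β))`. -/
theorem markov_fluid_throughput_second_derivative
    (θ α β : ℝ) (hθ : 0 < θ) (hα : 0 < α) (hβ : 0 ≤ β)
    (Pon : ℝ) (hPon : Pon = α / (α + β))
    (g g' : ℝ → ℝ) (g'' : ℝ)
    (ε : ℝ) (hε : 0 < ε) (hgcont : ContinuousOn g (Set.Ico 0 ε))
    (hg0 : g 0 = 1)
    (hgderiv : ∀ x ∈ Set.Ico 0 ε, HasDerivWithinAt g (g' x) (Set.Ici 0) x)
    (hgderiv2 : HasDerivWithinAt g' g'' (Set.Ici 0) 0)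
    (ζ : ℝ) (hζ : ζ = 2 * β / (α * (α + β)))
    (r : ℝ → ℝ)
    (hr : ∀ x, r x = -(Pon / θ) *
      ((α + β - Real.log (g x)) / (α - Real.log (g x))) * Real.log (g x)) :
    ∃ r' : ℝ → ℝ,
      (∀ᶠ x in nhdsWithin 0 (Set.Ici 0), HasDerivWithinAt r (r' x) (Set.Ici 0) x) ∧
      HasDerivWithinAt r' (-g'' / θ + (1 - ζ) * (g' 0) ^ 2 / θ) (Set.Ici 0) 0 := by
  have hrfun : r = fun x => -(Pon / θ) *
      ((α + β - Real.log (g x)) / (α - Real.log (g x))) * Real.log (g x) := funext hr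
  set r' : ℝ → ℝ := fun x =>
    -(Pon / θ) * (1 + β * α / (α - Real.log (g x)) ^ 2) * (g' x / g x) with hr'def
  have hαβ : 0 < α + β := by linarith
  refine ⟨r', ?_, ?_⟩
  · -- eventually derivative
    have h0mem : (0:ℝ) ∈ Set.Ico 0 ε := ⟨le_refl _, hε⟩
    have hcont0 : Filter.Tendsto g (nhdsWithin 0 (Set.Ici 0)) (nhds 1) := by
      have := (hgderiv 0 h0mem).continuousWithinAt
      simpa [ContinuousWithinAt, hg0] using this
    have h1 : ∀ᶠ x in nhdsWithin 0 (Set.Ici 0), g x ∈ Set.Ioo 0 (Real.exp α) := by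
      apply hcont0.eventually
      apply isOpen_Ioo.eventually_mem
      exact ⟨one_pos, Real.one_lt_exp_iff.mpr hα⟩
    have h2 : ∀ᶠ x in nhdsWithin 0 (Set.Ici 0), x ∈ Set.Ico 0 ε := by
      have : Set.Ico 0 ε = Set.Ici 0 ∩ Set.Iio ε := by
        ext y; simp [Set.mem_Ico, Set.mem_Iio, and_comm]
      rw [this]
      exact Filter.inter_mem self_mem_nhdsWithin
        (nhdsWithin_le_nhds (Iio_mem_nhds hε))
    filter_upwards [h1, h2] with x hx1 hx2
    have hgx : 0 < g x := hx1.1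
    have hlog : Real.log (g x) < α := by
      have := Real.log_lt_log hgx hx1.2
      simpa using this
    have hB : α - Real.log (g x) ≠ 0 := by linarith [hlog]
    have hL : HasDerivWithinAt (fun y => Real.log (g y)) (g' x / g x) (Set.Ici 0) x :=
      (hgderiv x hx2).log hgx.ne'
    have hA : HasDerivWithinAt (fun y => α + β - Real.log (g y)) (-(g' x / g x))
        (Set.Ici 0) x := hL.const_sub _
    have hBd : HasDerivWithinAt (fun y => α - Real.log (g y)) (-(g' x / g x))
        (Set.Ici 0) x := hL.const_sub _
    have hC := hA.div hBd hB
    have hD := (hC.const_mul (-(Pon / θ))).mul hL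
    rw [hrfun]
    have hEq : -(Pon / θ) *
        ((-(g' x / g x) * (α - Real.log (g x)) -
          (α + β - Real.log (g x)) * -(g' x / g x)) / (α - Real.log (g x)) ^ 2) *
        Real.log (g x) +
        -(Pon / θ) * ((α + β - Real.log (g x)) / (α - Real.log (g x))) * (g' x / g x)
        = r' x := by
      rw [hr'def]
      field_simp
      ring
    exact hEq ▸ hD
  · -- second derivative at 0
    have h0mem : (0:ℝ) ∈ Set.Ico 0 ε := ⟨le_refl _, hε⟩
    have hg0' : g 0 ≠ 0 := by rw [hg0]; norm_num
    have hL0 : HasDerivWithinAt (fun y => Real.log (g y)) (g' 0 / g 0) (Set.Ici 0) 0 :=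
      (hgderiv 0 h0mem).log hg0'
    have hB0 : HasDerivWithinAt (fun y => α - Real.log (g y)) (-(g' 0 / g 0))
        (Set.Ici 0) 0 := hL0.const_sub _
    have hB0ne : (α - Real.log (g 0)) ^ 2 ≠ 0 := by
      rw [hg0]; simp [hα.ne']
    have hBpow : HasDerivWithinAt (fun y => (α - Real.log (g y)) ^ 2)
        ((2 : ℕ) * (α - Real.log (g 0)) ^ (2 - 1) * (-(g' 0 / g 0))) (Set.Ici 0) 0 :=
      hB0.pow 2
    have hP1 : HasDerivWithinAt (fun y => 1 + β * α / (α - Real.log (g y)) ^ 2)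
        ((0 * (α - Real.log (g 0)) ^ 2 - β * α *
          ((2 : ℕ) * (α - Real.log (g 0)) ^ (2 - 1) * (-(g' 0 / g 0)))) /
          ((α - Real.log (g 0)) ^ 2) ^ 2) (Set.Ici 0) 0 :=
      ((hasDerivWithinAt_const _ _ (β * α)).div hBpow hB0ne).const_add 1
    have hP2 : HasDerivWithinAt (fun y => g' y / g y)
        ((g'' * g 0 - g' 0 * g' 0) / (g 0) ^ 2) (Set.Ici 0) 0 :=
      hgderiv2.div (hgderiv 0 h0mem) hg0'
    have hD := (hP1.const_mul (-(Pon / θ))).mul hP2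
    have hEq : -(Pon / θ) *
        ((0 * (α - Real.log (g 0)) ^ 2 - β * α *
          ((2 : ℕ) * (α - Real.log (g 0)) ^ (2 - 1) * (-(g' 0 / g 0)))) /
          ((α - Real.log (g 0)) ^ 2) ^ 2) * (g' 0 / g 0) +
        -(Pon / θ) * (1 + β * α / (α - Real.log (g 0)) ^ 2) *
          ((g'' * g 0 - g' 0 * g' 0) / (g 0) ^ 2)
        = -g'' / θ + (1 - ζ) * (g' 0) ^ 2 / θ := by
      rw [hg0, hPon, hζ]
      simp only [Real.log_one, sub_zero]
      field_simp
      ring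
    exact hEq ▸ hD
end

section
/- For an ON–OFF discrete-time Markov source, the throughput r_avg is twice differentiable at snr = 0 and the wideband slope of the first user's confidential message equals S₀ = −2·(r_avg'(0))²·log_e 2 / r_avg''(0) = 2·(E[X])² / (η·(θ/log_e 2)·(E[X])² + (θ/log_e 2)·Var(X) + E[Y]), where X = δ·(z1 − z2)·1{z1 ≥ z2}, Y = δ²·(z1² − z2²)·1{z1 ≥ z2}, and η = (1 − p22)(p11 + p22)/((1 − p11)(2 − p11 − p22)). -/
/-!
Put `u = δ·(z1, z2)` on `{z1 ≥ z2}` and `u = 0` elsewhere, and let `c = θ / log 2`. For `snr`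
near `0`, `exp(−θ R1) = exp(−c (log(1 + snr u₁) − log(1 + snr u₂)))`. This kernel and its first
two `snr`-derivatives are jointly continuous in `(u, snr)` and `u` ranges over a compact set, so
they are uniformly bounded and `g1` can be differentiated twice under the integral:
`g1(0) = 1`, `g1'(0) = −c E[X]`, `g1''(0) = c² E[X²] + c E[Y]`. Since `r_avg = h ∘ g1` with
`h'(1) = −1/θ` and `h''(1) = (1 − η)/θ`, the second-order chain rule gives `r_avg'(0)` and
`r_avg''(0)`, and the slope formula is algebra.
-/

open MeasureTheory Filter Set Real Metric Function Topology

theorem hasDerivAt_integral_of_isCompact {Ω E : Type*} [MeasurableSpace Ω] [TopologicalSpace E]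
    [MeasurableSpace E] {μ : Measure Ω} [IsFiniteMeasure μ] {S : Set E} (hS : IsCompact S)
    {u : Ω → E} (hu : Measurable u) (huS : ∀ ω, u ω ∈ S) {U : Set ℝ} (hU : IsOpen U)
    {f f' : E → ℝ → ℝ} (hfm : ∀ s, Measurable (f · s)) (hf'm : ∀ s, Measurable (f' · s))
    (hf : ContinuousOn (uncurry f) (S ×ˢ U)) (hf' : ContinuousOn (uncurry f') (S ×ˢ U))
    (hderiv : ∀ p ∈ S, ∀ s ∈ U, HasDerivAt (f p) (f' p s) s) {x₀ : ℝ} (hx₀ : x₀ ∈ U) :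
    HasDerivAt (fun s ↦ ∫ ω, f (u ω) s ∂μ) (∫ ω, f' (u ω) x₀ ∂μ) x₀ := by
  obtain ⟨r, hr, hrU⟩ := nhds_basis_closedBall.mem_iff.1 (hU.mem_nhds hx₀)
  have hT : IsCompact (S ×ˢ closedBall x₀ r) := hS.prod (isCompact_closedBall x₀ r)
  have hTU : S ×ˢ closedBall x₀ r ⊆ S ×ˢ U := prod_mono subset_rfl hrU
  obtain ⟨C, hC⟩ := hT.exists_bound_of_continuousOn (hf.mono hTU)
  obtain ⟨C', hC'⟩ := hT.exists_bound_of_continuousOn (hf'.mono hTU)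
  have hx₀r : x₀ ∈ closedBall x₀ r := mem_closedBall_self hr.le
  refine (hasDerivAt_integral_of_dominated_loc_of_deriv_le (bound := fun _ ↦ C')
    (closedBall_mem_nhds x₀ hr) (.of_forall fun s ↦ ((hfm s).comp hu).aestronglyMeasurable)
    (.of_bound ((hfm x₀).comp hu).aestronglyMeasurable C
      (.of_forall fun ω ↦ hC (u ω, x₀) ⟨huS ω, hx₀r⟩))
    ((hf'm x₀).comp hu).aestronglyMeasurable
    (.of_forall fun ω s hs ↦ hC' (u ω, s) ⟨huS ω, hs⟩) (integrable_const C')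
    (.of_forall fun ω s hs ↦ hderiv (u ω) (huS ω) s (hrU hs))).2

theorem integrable_comp_of_norm_le {Ω E : Type*} [MeasurableSpace Ω] [NormedAddCommGroup E]
    [ProperSpace E] [MeasurableSpace E] [OpensMeasurableSpace E] {μ : Measure Ω}
    [IsFiniteMeasure μ] {u : Ω → E} {K : ℝ} (hu : Measurable u) (huK : ∀ ω, ‖u ω‖ ≤ K)
    {φ : E → ℝ} (hφ : Continuous φ) : Integrable (fun ω ↦ φ (u ω)) μ := by
  obtain ⟨C, hC⟩ := (isCompact_closedBall (0 : E) K).exists_bound_of_continuousOn hφ.continuousOn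
  exact .of_bound (hφ.measurable.comp hu).aestronglyMeasurable C
    (.of_forall fun ω ↦ hC (u ω) (mem_closedBall_zero_iff.2 (huK ω)))

theorem eventually_hasDerivAt_comp {g g' h h' : ℝ → ℝ} {x₀ : ℝ}
    (hh : ∀ᶠ y in 𝓝 (g x₀), HasDerivAt h (h' y) y) (hg : ∀ᶠ x in 𝓝 x₀, HasDerivAt g (g' x) x) :
    ∀ᶠ x in 𝓝 x₀, HasDerivAt (h ∘ g) (h' (g x) * g' x) x := by
  filter_upwards [hg.self_of_nhds.continuousAt.tendsto.eventually hh, hg] with x hhx hgx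
  exact hhx.comp x hgx

noncomputable section

def logRatio (p : ℝ × ℝ) (s : ℝ) : ℝ := log (1 + s * p.1) - log (1 + s * p.2)

def logRatioDeriv (p : ℝ × ℝ) (s : ℝ) : ℝ := p.1 / (1 + s * p.1) - p.2 / (1 + s * p.2)

def expKernel (c : ℝ) (p : ℝ × ℝ) (s : ℝ) : ℝ := exp (-c * logRatio p s)

def expKernelDeriv (c : ℝ) (p : ℝ × ℝ) (s : ℝ) : ℝ := expKernel c p s * (-c * logRatioDeriv p s)

def expKernelDeriv2 (c : ℝ) (p : ℝ × ℝ) (s : ℝ) : ℝ :=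
  expKernel c p s * ((c * logRatioDeriv p s) ^ 2 +
    c * ((p.1 / (1 + s * p.1)) ^ 2 - (p.2 / (1 + s * p.2)) ^ 2))

def gainPair {Ω : Type*} (δ : ℝ) (z₁ z₂ : Ω → ℝ) (ω : Ω) : ℝ × ℝ :=
  if z₂ ω ≤ z₁ ω then (δ * z₁ ω, δ * z₂ ω) else 0

def onOffThroughput (θ p₁₁ p₂₂ g : ℝ) : ℝ :=
  (1 - p₁₁) / (2 - p₁₁ - p₂₂) / θ *
    log ((1 - p₁₁ * g) / ((1 - p₁₁ - p₂₂) * g ^ 2 + p₂₂ * g))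

def onOffThroughputDeriv (θ p₁₁ p₂₂ g : ℝ) : ℝ :=
  (1 - p₁₁) / (2 - p₁₁ - p₂₂) / θ *
    (-p₁₁ / (1 - p₁₁ * g) - (2 * (1 - p₁₁ - p₂₂) * g + p₂₂) / ((1 - p₁₁ - p₂₂) * g ^ 2 + p₂₂ * g))

end

section ExpKernel

variable (c : ℝ) {p : ℝ × ℝ} {s : ℝ}

theorem one_add_mul_ne_zero_of_mem {K : ℝ} (hp : p ∈ closedBall 0 K) (hs : s ∈ ball 0 K⁻¹) :
    1 + s * p.1 ≠ 0 ∧ 1 + s * p.2 ≠ 0 := by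
  rw [mem_closedBall_zero_iff] at hp
  rw [mem_ball_zero_iff, Real.norm_eq_abs] at hs
  have hK : 0 < K := by
    by_contra! h
    linarith [inv_nonpos.2 h, abs_nonneg s]
  have of_abs_le (a : ℝ) (ha : |a| ≤ K) : 1 + s * a ≠ 0 := by
    have : |s * a| < 1 := by
      rw [abs_mul]
      calc |s| * |a| ≤ |s| * K := by gcongr
        _ < K⁻¹ * K := by gcongr
        _ = 1 := inv_mul_cancel₀ hK.ne'
    linarith [neg_abs_le (s * a)]
  exact ⟨of_abs_le _ ((norm_fst_le p).trans hp), of_abs_le _ ((norm_snd_le p).trans hp)⟩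

theorem hasDerivAt_one_add_mul (a s : ℝ) : HasDerivAt (fun x ↦ 1 + x * a) a s := by
  simpa using ((hasDerivAt_id s).mul_const a).const_add 1

theorem hasDerivAt_logRatio (hps : 1 + s * p.1 ≠ 0 ∧ 1 + s * p.2 ≠ 0) :
    HasDerivAt (logRatio p) (logRatioDeriv p s) s :=
  ((hasDerivAt_one_add_mul p.1 s).log hps.1).sub ((hasDerivAt_one_add_mul p.2 s).log hps.2)

theorem hasDerivAt_logRatioDeriv (hps : 1 + s * p.1 ≠ 0 ∧ 1 + s * p.2 ≠ 0) :
    HasDerivAt (logRatioDeriv p) ((p.2 / (1 + s * p.2)) ^ 2 - (p.1 / (1 + s * p.1)) ^ 2) s := by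
  have hasDerivAt_div (a : ℝ) (ha : 1 + s * a ≠ 0) :
      HasDerivAt (fun x ↦ a / (1 + x * a)) (-(a / (1 + s * a)) ^ 2) s := by
    refine ((hasDerivAt_const s a).div (hasDerivAt_one_add_mul a s) ha).congr_deriv ?_
    field_simp
    ring
  exact ((hasDerivAt_div p.1 hps.1).sub (hasDerivAt_div p.2 hps.2)).congr_deriv (by ring)

theorem hasDerivAt_expKernel (hps : 1 + s * p.1 ≠ 0 ∧ 1 + s * p.2 ≠ 0) :
    HasDerivAt (expKernel c p) (expKernelDeriv c p s) s :=
  ((hasDerivAt_logRatio hps).const_mul (-c)).exp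

theorem hasDerivAt_expKernelDeriv (hps : 1 + s * p.1 ≠ 0 ∧ 1 + s * p.2 ≠ 0) :
    HasDerivAt (expKernelDeriv c p) (expKernelDeriv2 c p s) s := by
  refine ((hasDerivAt_expKernel c hps).mul
    ((hasDerivAt_logRatioDeriv hps).const_mul (-c))).congr_deriv ?_
  simp only [expKernelDeriv, expKernelDeriv2]
  ring

theorem continuousAt_expKernel (hps : 1 + s * p.1 ≠ 0 ∧ 1 + s * p.2 ≠ 0) :
    ContinuousAt (uncurry (expKernel c)) (p, s) := by
  obtain ⟨h₁, h₂⟩ := hps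
  simp only [uncurry_def, expKernel, logRatio]
  fun_prop (disch := assumption)

theorem continuousAt_expKernelDeriv (hps : 1 + s * p.1 ≠ 0 ∧ 1 + s * p.2 ≠ 0) :
    ContinuousAt (uncurry (expKernelDeriv c)) (p, s) := by
  obtain ⟨h₁, h₂⟩ := hps
  simp only [uncurry_def, expKernelDeriv, expKernel, logRatio, logRatioDeriv]
  fun_prop (disch := assumption)

theorem continuousAt_expKernelDeriv2 (hps : 1 + s * p.1 ≠ 0 ∧ 1 + s * p.2 ≠ 0) :
    ContinuousAt (uncurry (expKernelDeriv2 c)) (p, s) := by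
  obtain ⟨h₁, h₂⟩ := hps
  simp only [uncurry_def, expKernelDeriv2, expKernel, logRatio, logRatioDeriv]
  fun_prop (disch := assumption)

theorem measurable_expKernel (s : ℝ) : Measurable (expKernel c · s) := by
  unfold expKernel logRatio
  fun_prop

theorem measurable_expKernelDeriv (s : ℝ) : Measurable (expKernelDeriv c · s) := by
  unfold expKernelDeriv expKernel logRatio logRatioDeriv
  fun_prop

theorem measurable_expKernelDeriv2 (s : ℝ) : Measurable (expKernelDeriv2 c · s) := by
  unfold expKernelDeriv2 expKernel logRatio logRatioDeriv
  fun_prop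

@[simp] theorem expKernel_zero (p : ℝ × ℝ) : expKernel c p 0 = 1 := by
  simp [expKernel, logRatio]

@[simp] theorem expKernelDeriv_zero (p : ℝ × ℝ) : expKernelDeriv c p 0 = -c * (p.1 - p.2) := by
  simp [expKernelDeriv, logRatioDeriv]

@[simp] theorem expKernelDeriv2_zero (p : ℝ × ℝ) :
    expKernelDeriv2 c p 0 = c ^ 2 * (p.1 - p.2) ^ 2 + c * (p.1 ^ 2 - p.2 ^ 2) := by
  simp [expKernelDeriv2, logRatioDeriv]
  ring

variable {Ω : Type*} [MeasurableSpace Ω] {μ : Measure Ω} {u : Ω → ℝ × ℝ}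

theorem integral_expKernelDeriv_zero :
    ∫ ω, expKernelDeriv c (u ω) 0 ∂μ = -c * ∫ ω, (u ω).1 - (u ω).2 ∂μ := by
  simp only [expKernelDeriv_zero, integral_const_mul]

variable [IsFiniteMeasure μ] {K : ℝ}

theorem hasDerivAt_integral_expKernel (hu : Measurable u) (huK : ∀ ω, ‖u ω‖ ≤ K)
    (hs : s ∈ ball (0 : ℝ) K⁻¹) :
    HasDerivAt (fun s ↦ ∫ ω, expKernel c (u ω) s ∂μ) (∫ ω, expKernelDeriv c (u ω) s ∂μ) s :=
  hasDerivAt_integral_of_isCompact (isCompact_closedBall 0 K) hu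
    (fun ω ↦ mem_closedBall_zero_iff.2 (huK ω)) isOpen_ball (measurable_expKernel c)
    (measurable_expKernelDeriv c)
    (fun _ hq ↦
      (continuousAt_expKernel c (one_add_mul_ne_zero_of_mem hq.1 hq.2)).continuousWithinAt)
    (fun _ hq ↦
      (continuousAt_expKernelDeriv c (one_add_mul_ne_zero_of_mem hq.1 hq.2)).continuousWithinAt)
    (fun _ hp _ hs ↦ hasDerivAt_expKernel c (one_add_mul_ne_zero_of_mem hp hs)) hs

theorem hasDerivAt_integral_expKernelDeriv (hu : Measurable u) (huK : ∀ ω, ‖u ω‖ ≤ K)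
    (hs : s ∈ ball (0 : ℝ) K⁻¹) :
    HasDerivAt (fun s ↦ ∫ ω, expKernelDeriv c (u ω) s ∂μ)
      (∫ ω, expKernelDeriv2 c (u ω) s ∂μ) s :=
  hasDerivAt_integral_of_isCompact (isCompact_closedBall 0 K) hu
    (fun ω ↦ mem_closedBall_zero_iff.2 (huK ω)) isOpen_ball (measurable_expKernelDeriv c)
    (measurable_expKernelDeriv2 c)
    (fun _ hq ↦
      (continuousAt_expKernelDeriv c (one_add_mul_ne_zero_of_mem hq.1 hq.2)).continuousWithinAt)
    (fun _ hq ↦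
      (continuousAt_expKernelDeriv2 c (one_add_mul_ne_zero_of_mem hq.1 hq.2)).continuousWithinAt)
    (fun _ hp _ hs ↦ hasDerivAt_expKernelDeriv c (one_add_mul_ne_zero_of_mem hp hs)) hs

theorem integral_expKernelDeriv2_zero (hu : Measurable u) (huK : ∀ ω, ‖u ω‖ ≤ K) :
    ∫ ω, expKernelDeriv2 c (u ω) 0 ∂μ =
      c ^ 2 * ∫ ω, ((u ω).1 - (u ω).2) ^ 2 ∂μ + c * ∫ ω, (u ω).1 ^ 2 - (u ω).2 ^ 2 ∂μ := by
  simp only [expKernelDeriv2_zero]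
  rw [integral_add, integral_const_mul, integral_const_mul] <;> apply Integrable.const_mul
  · exact integrable_comp_of_norm_le hu huK (φ := fun p ↦ (p.1 - p.2) ^ 2) (by fun_prop)
  · exact integrable_comp_of_norm_le hu huK (φ := fun p ↦ p.1 ^ 2 - p.2 ^ 2) (by fun_prop)

end ExpKernel

section GainPair

variable {Ω : Type*} {δ : ℝ} {z₁ z₂ : Ω → ℝ}

theorem measurable_gainPair [MeasurableSpace Ω] (hz₁ : Measurable z₁) (hz₂ : Measurable z₂) :
    Measurable (gainPair δ z₁ z₂) :=
  Measurable.ite (measurableSet_le hz₂ hz₁) ((hz₁.const_mul δ).prodMk (hz₂.const_mul δ))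
    measurable_const

theorem norm_gainPair_le {M : ℝ} (hz₁ : ∀ ω, z₁ ω ∈ Icc 0 M) (hz₂ : ∀ ω, z₂ ω ∈ Icc 0 M)
    (ω : Ω) : ‖gainPair δ z₁ z₂ ω‖ ≤ |δ| * M := by
  have hδz (z : Ω → ℝ) (hz : ∀ ω, z ω ∈ Icc 0 M) : ‖δ * z ω‖ ≤ |δ| * M := by
    rw [norm_mul, Real.norm_eq_abs, Real.norm_eq_abs, abs_of_nonneg (hz ω).1]
    exact mul_le_mul_of_nonneg_left (hz ω).2 (abs_nonneg δ)
  unfold gainPair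
  split_ifs
  · exact norm_prod_le_iff.2 ⟨hδz z₁ hz₁, hδz z₂ hz₂⟩
  · simpa using mul_nonneg (abs_nonneg δ) ((hz₁ ω).1.trans (hz₁ ω).2)

theorem gainPair_fst_sub_snd (ω : Ω) :
    (gainPair δ z₁ z₂ ω).1 - (gainPair δ z₁ z₂ ω).2 =
      if z₂ ω ≤ z₁ ω then δ * (z₁ ω - z₂ ω) else 0 := by
  unfold gainPair
  split_ifs <;> simp [mul_sub]

theorem gainPair_fst_sq_sub_snd_sq (ω : Ω) :
    (gainPair δ z₁ z₂ ω).1 ^ 2 - (gainPair δ z₁ z₂ ω).2 ^ 2 =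
      if z₂ ω ≤ z₁ ω then δ ^ 2 * (z₁ ω ^ 2 - z₂ ω ^ 2) else 0 := by
  unfold gainPair
  split_ifs <;> simp [mul_sub, mul_pow]

theorem exp_neg_mul_rate_eq_expKernel (θ s : ℝ) (ω : Ω)
    (hs : 1 + s * (gainPair δ z₁ z₂ ω).1 ≠ 0 ∧ 1 + s * (gainPair δ z₁ z₂ ω).2 ≠ 0) :
    exp (-θ * if z₂ ω ≤ z₁ ω then logb 2 ((1 + δ * s * z₁ ω) / (1 + δ * s * z₂ ω)) else 0) =
      expKernel (θ / log 2) (gainPair δ z₁ z₂ ω) s := by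
  unfold gainPair at hs ⊢
  split_ifs with h
  · simp only [h, if_true] at hs
    rw [show δ * s * z₁ ω = s * (δ * z₁ ω) by ring, show δ * s * z₂ ω = s * (δ * z₂ ω) by ring,
      logb, log_div hs.1 hs.2, expKernel, logRatio]
    ring_nf
  · simp [expKernel, logRatio]

end GainPair

section OnOffThroughput

variable {θ p₁₁ p₂₂ g : ℝ}

theorem hasDerivAt_one_sub_mul (a g : ℝ) : HasDerivAt (fun g ↦ 1 - a * g) (-a) g := by
  simpa using ((hasDerivAt_id g).const_mul a).const_sub 1

theorem hasDerivAt_mul_sq_add_mul (a b g : ℝ) :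
    HasDerivAt (fun g ↦ a * g ^ 2 + b * g) (2 * a * g + b) g :=
  (((hasDerivAt_pow 2 g).const_mul a).add ((hasDerivAt_id g).const_mul b)).congr_deriv (by ring)

theorem hasDerivAt_onOffThroughput (hN : 1 - p₁₁ * g ≠ 0)
    (hD : (1 - p₁₁ - p₂₂) * g ^ 2 + p₂₂ * g ≠ 0) :
    HasDerivAt (onOffThroughput θ p₁₁ p₂₂) (onOffThroughputDeriv θ p₁₁ p₂₂ g) g := by
  refine ((((hasDerivAt_one_sub_mul p₁₁ g).div (hasDerivAt_mul_sq_add_mul _ p₂₂ g) hD).log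
    (div_ne_zero hN hD)).const_mul _).congr_deriv ?_
  simp only [onOffThroughputDeriv, Pi.div_apply]
  generalize 1 - p₁₁ * g = N at hN ⊢
  generalize (1 - p₁₁ - p₂₂) * g ^ 2 + p₂₂ * g = D at hD ⊢
  field_simp

theorem eventually_hasDerivAt_onOffThroughput (hp₁₁ : p₁₁ ≠ 1) :
    ∀ᶠ g in 𝓝 1, HasDerivAt (onOffThroughput θ p₁₁ p₂₂) (onOffThroughputDeriv θ p₁₁ p₂₂ g) g := by
  have h₁ : (1 : ℝ) - p₁₁ ≠ 0 := sub_ne_zero.2 hp₁₁.symm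
  have hN : ∀ᶠ g in 𝓝 (1 : ℝ), 1 - p₁₁ * g ≠ 0 :=
    (hasDerivAt_one_sub_mul p₁₁ 1).continuousAt.eventually_ne (by simpa using h₁)
  have hD : ∀ᶠ g in 𝓝 (1 : ℝ), (1 - p₁₁ - p₂₂) * g ^ 2 + p₂₂ * g ≠ 0 :=
    (hasDerivAt_mul_sq_add_mul _ p₂₂ 1).continuousAt.eventually_ne (by simpa using h₁)
  filter_upwards [hN, hD] with g hNg hDg
  exact hasDerivAt_onOffThroughput hNg hDg

theorem onOffThroughputDeriv_one (hp₁₁ : p₁₁ ≠ 1) (hp : p₁₁ + p₂₂ ≠ 2) :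
    onOffThroughputDeriv θ p₁₁ p₂₂ 1 = -1 / θ := by
  have h₁ : (1 : ℝ) - p₁₁ ≠ 0 := sub_ne_zero.2 hp₁₁.symm
  have h₂ : (2 : ℝ) - p₁₁ - p₂₂ ≠ 0 := by intro h; apply hp; linarith
  simp only [onOffThroughputDeriv, mul_one, one_pow, sub_add_cancel]
  field_simp
  ring

theorem hasDerivAt_onOffThroughputDeriv_one (hp₁₁ : p₁₁ ≠ 1) (hp : p₁₁ + p₂₂ ≠ 2) :
    HasDerivAt (onOffThroughputDeriv θ p₁₁ p₂₂)
      ((1 - (1 - p₂₂) * (p₁₁ + p₂₂) / ((1 - p₁₁) * (2 - p₁₁ - p₂₂))) / θ) 1 := by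
  have h₁ : (1 : ℝ) - p₁₁ ≠ 0 := sub_ne_zero.2 hp₁₁.symm
  have h₂ : (2 : ℝ) - p₁₁ - p₂₂ ≠ 0 := by intro h; apply hp; linarith
  have hN : (1 : ℝ) - p₁₁ * 1 ≠ 0 := by simpa using h₁
  have hD : (1 - p₁₁ - p₂₂) * 1 ^ 2 + p₂₂ * 1 ≠ 0 := by simpa using h₁
  have hD' : HasDerivAt (fun g ↦ 2 * (1 - p₁₁ - p₂₂) * g + p₂₂) (2 * (1 - p₁₁ - p₂₂)) 1 := by
    simpa using ((hasDerivAt_id (1 : ℝ)).const_mul (2 * (1 - p₁₁ - p₂₂))).add_const p₂₂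
  refine ((((hasDerivAt_const 1 (-p₁₁)).div (hasDerivAt_one_sub_mul p₁₁ 1) hN).sub
    (hD'.div (hasDerivAt_mul_sq_add_mul _ p₂₂ 1) hD)).const_mul _).congr_deriv ?_
  simp only [mul_one, one_pow, sub_add_cancel]
  field_simp
  ring

end OnOffThroughput

theorem wideband_slope_formula {θ L η m₁ m₂ m₃ : ℝ} (hθ : θ ≠ 0) (hL : L ≠ 0) :
    -2 * (-1 / θ * (-(θ / L) * m₁)) ^ 2 * L /
        ((1 - η) / θ * (-(θ / L) * m₁) * (-(θ / L) * m₁) +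
          -1 / θ * ((θ / L) ^ 2 * m₂ + θ / L * m₃))
      = 2 * m₁ ^ 2 / (η * (θ / L) * m₁ ^ 2 + θ / L * (m₂ - m₁ ^ 2) + m₃) := by
  have hden : (1 - η) / θ * (-(θ / L) * m₁) * (-(θ / L) * m₁) +
      -1 / θ * ((θ / L) ^ 2 * m₂ + θ / L * m₃)
      = -L⁻¹ * (η * (θ / L) * m₁ ^ 2 + θ / L * (m₂ - m₁ ^ 2) + m₃) := by
    field_simp
    ring
  have hnum : -2 * (-1 / θ * (-(θ / L) * m₁)) ^ 2 * L = -L⁻¹ * (2 * m₁ ^ 2) := by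
    field_simp
  rw [hden, hnum, mul_div_mul_left _ _ (neg_ne_zero.2 (inv_ne_zero hL))]

theorem wideband_slope_confidential_discrete_markov_general
    {Ω : Type*} [MeasurableSpace Ω] (μ : Measure Ω) [IsProbabilityMeasure μ]
    (z1 z2 : Ω → ℝ) (hz1m : Measurable z1) (hz2m : Measurable z2)
    (hz1nn : ∀ ω, 0 ≤ z1 ω) (hz2nn : ∀ ω, 0 ≤ z2 ω)
    (M : ℝ) (hz1b : ∀ ω, z1 ω ≤ M) (hz2b : ∀ ω, z2 ω ≤ M)
    (θ δ p11 p22 : ℝ) (hθ : 0 < θ)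
    (hp11 : p11 ∈ Set.Ioo (0 : ℝ) 1) (hp22 : p22 ∈ Set.Ioo (0 : ℝ) 1)
    (Pon : ℝ) (hPon : Pon = (1 - p11) / (2 - p11 - p22))
    (η : ℝ) (hη : η = (1 - p22) * (p11 + p22) / ((1 - p11) * (2 - p11 - p22)))
    (R1 : ℝ → Ω → ℝ)
    (hR1 : ∀ snr ω, R1 snr ω =
      if z2 ω ≤ z1 ω then
        Real.logb 2 ((1 + δ * snr * z1 ω) / (1 + δ * snr * z2 ω)) else 0)
    (g1 : ℝ → ℝ) (hg1 : ∀ snr, g1 snr = ∫ ω, Real.exp (-θ * R1 snr ω) ∂μ)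
    (ravg : ℝ → ℝ)
    (hravg : ∀ snr, ravg snr = (Pon / θ) * Real.log
      ((1 - p11 * g1 snr) / ((1 - p11 - p22) * (g1 snr) ^ 2 + p22 * g1 snr)))
    (X Y : Ω → ℝ)
    (hX : ∀ ω, X ω = if z2 ω ≤ z1 ω then δ * (z1 ω - z2 ω) else 0)
    (hY : ∀ ω, Y ω = if z2 ω ≤ z1 ω then δ ^ 2 * ((z1 ω) ^ 2 - (z2 ω) ^ 2) else 0)
    (VarX : ℝ) (hVarX : VarX = (∫ ω, (X ω) ^ 2 ∂μ) - (∫ ω, X ω ∂μ) ^ 2) :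
    ∃ ravg' : ℝ → ℝ, ∃ d2 : ℝ,
      (∀ᶠ snr in nhdsWithin 0 (Set.Ici 0),
        HasDerivWithinAt ravg (ravg' snr) (Set.Ici 0) snr) ∧
      HasDerivWithinAt ravg' d2 (Set.Ici 0) 0 ∧
      -2 * (ravg' 0) ^ 2 * Real.log 2 / d2
        = 2 * (∫ ω, X ω ∂μ) ^ 2 /
          (η * (θ / Real.log 2) * (∫ ω, X ω ∂μ) ^ 2
            + (θ / Real.log 2) * VarX + ∫ ω, Y ω ∂μ) := by
  have hp₁₁ : p11 ≠ 1 := hp11.2.ne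
  have hp : p11 + p22 ≠ 2 := by linarith [hp11.2, hp22.2]
  set u := gainPair δ z1 z2
  have hu : Measurable u := measurable_gainPair hz1m hz2m
  set K := max (|δ| * M) 1
  have huK (ω : Ω) : ‖u ω‖ ≤ K :=
    le_max_of_le_left (norm_gainPair_le (fun ω ↦ ⟨hz1nn ω, hz1b ω⟩) (fun ω ↦ ⟨hz2nn ω, hz2b ω⟩) ω)
  have hK : (0 : ℝ) ∈ ball 0 K⁻¹ := mem_ball_self (by positivity)
  have hg1_eq : ∀ s ∈ ball (0 : ℝ) K⁻¹, g1 s = ∫ ω, expKernel (θ / log 2) (u ω) s ∂μ :=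
    fun s hs ↦ by simp only [u, hg1, hR1, exp_neg_mul_rate_eq_expKernel θ s _
      (one_add_mul_ne_zero_of_mem (mem_closedBall_zero_iff.2 (huK _)) hs)]
  have hg1_zero : g1 0 = 1 := by simp [hg1_eq 0 hK]
  have hg1_deriv : ∀ᶠ s in 𝓝 0,
      HasDerivAt g1 (∫ ω, expKernelDeriv (θ / log 2) (u ω) s ∂μ) s := by
    filter_upwards [isOpen_ball.mem_nhds hK] with s hs
    exact (hasDerivAt_integral_expKernel _ hu huK hs).congr_of_eventuallyEq
      (eventually_of_mem (isOpen_ball.mem_nhds hs) hg1_eq)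
  have hravg_eq : ravg = onOffThroughput θ p11 p22 ∘ g1 :=
    funext fun s ↦ by simp [hravg, hPon, onOffThroughput]
  have hh := hg1_zero ▸ eventually_hasDerivAt_onOffThroughput (θ := θ) (p₂₂ := p22) hp₁₁
  have hh' := hg1_zero ▸ hasDerivAt_onOffThroughputDeriv_one (θ := θ) hp₁₁ hp
  refine ⟨fun s ↦ onOffThroughputDeriv θ p11 p22 (g1 s) *
      ∫ ω, expKernelDeriv (θ / log 2) (u ω) s ∂μ, _, ?_,
    ((hh'.comp 0 hg1_deriv.self_of_nhds).mul
      (hasDerivAt_integral_expKernelDeriv _ hu huK hK)).hasDerivWithinAt, ?_⟩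
  · rw [hravg_eq]
    exact ((eventually_hasDerivAt_comp hh hg1_deriv).filter_mono nhdsWithin_le_nhds).mono
      fun _ h ↦ h.hasDerivWithinAt
  · have hXu : X = fun ω ↦ (u ω).1 - (u ω).2 := funext fun ω ↦ by rw [hX, gainPair_fst_sub_snd]
    have hYu : Y = fun ω ↦ (u ω).1 ^ 2 - (u ω).2 ^ 2 :=
      funext fun ω ↦ by rw [hY, gainPair_fst_sq_sub_snd_sq]
    simp only [comp_apply, hg1_zero, onOffThroughputDeriv_one hp₁₁ hp,
      integral_expKernelDeriv_zero, integral_expKernelDeriv2_zero _ hu huK, hVarX, ← hη, hXu, hYu]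
    exact wideband_slope_formula hθ.ne' (Real.log_pos one_lt_two).ne'

/-- For an ON–OFF discrete-time Markov source, the throughput `r_avg`
is twice differentiable (from the right) at `snr = 0` and the wideband slope of the
first user's confidential message equals
`S₀ = −2·(r_avg'(0))²·log 2 / r_avg''(0)
    = 2·(E[X])² / (η·(θ/log 2)·(E[X])² + (θ/log 2)·Var(X) + E[Y])`, where
`X = δ·(z1 − z2)·1{z1 ≥ z2}`, `Y = δ²·(z1² − z2²)·1{z1 ≥ z2}`, and
`η = (1 − p22)(p11 + p22)/((1 − p11)(2 − p11 − p22))`. -/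
theorem wideband_slope_confidential_discrete_markov
    {Ω : Type*} [MeasurableSpace Ω] (μ : Measure Ω) [IsProbabilityMeasure μ]
    (z1 z2 : Ω → ℝ) (hz1m : Measurable z1) (hz2m : Measurable z2)
    (hz1nn : ∀ ω, 0 ≤ z1 ω) (hz2nn : ∀ ω, 0 ≤ z2 ω)
    (M : ℝ) (hz1b : ∀ ω, z1 ω ≤ M) (hz2b : ∀ ω, z2 ω ≤ M)
    (hpos : 0 < (μ {ω | z2 ω < z1 ω}).toReal)
    (θ δ p11 p22 : ℝ) (hθ : 0 < θ) (hδ0 : 0 < δ) (hδ1 : δ ≤ 1)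
    (hp11 : p11 ∈ Set.Ioo (0 : ℝ) 1) (hp22 : p22 ∈ Set.Ioo (0 : ℝ) 1)
    (Pon : ℝ) (hPon : Pon = (1 - p11) / (2 - p11 - p22))
    (η : ℝ) (hη : η = (1 - p22) * (p11 + p22) / ((1 - p11) * (2 - p11 - p22)))
    (R1 : ℝ → Ω → ℝ)
    (hR1 : ∀ snr ω, R1 snr ω =
      if z2 ω ≤ z1 ω then
        Real.logb 2 ((1 + δ * snr * z1 ω) / (1 + δ * snr * z2 ω)) else 0)
    (g1 : ℝ → ℝ) (hg1 : ∀ snr, g1 snr = ∫ ω, Real.exp (-θ * R1 snr ω) ∂μ)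
    (ravg : ℝ → ℝ)
    (hravg : ∀ snr, ravg snr = (Pon / θ) * Real.log
      ((1 - p11 * g1 snr) / ((1 - p11 - p22) * (g1 snr) ^ 2 + p22 * g1 snr)))
    (X Y : Ω → ℝ)
    (hX : ∀ ω, X ω = if z2 ω ≤ z1 ω then δ * (z1 ω - z2 ω) else 0)
    (hY : ∀ ω, Y ω = if z2 ω ≤ z1 ω then δ ^ 2 * ((z1 ω) ^ 2 - (z2 ω) ^ 2) else 0)
    (VarX : ℝ) (hVarX : VarX = (∫ ω, (X ω) ^ 2 ∂μ) - (∫ ω, X ω ∂μ) ^ 2) :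
    ∃ ravg' : ℝ → ℝ, ∃ d2 : ℝ,
      (∀ᶠ snr in nhdsWithin 0 (Set.Ici 0),
        HasDerivWithinAt ravg (ravg' snr) (Set.Ici 0) snr) ∧
      HasDerivWithinAt ravg' d2 (Set.Ici 0) 0 ∧
      -2 * (ravg' 0) ^ 2 * Real.log 2 / d2
        = 2 * (∫ ω, X ω ∂μ) ^ 2 /
          (η * (θ / Real.log 2) * (∫ ω, X ω ∂μ) ^ 2
            + (θ / Real.log 2) * VarX + ∫ ω, Y ω ∂μ) :=
  wideband_slope_confidential_discrete_markov_general μ z1 z2 hz1m hz2m hz1nn hz2nn M hz1b hz2b θ δ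
    p11 p22 hθ hp11 hp22 Pon hPon η hη R1 hR1 g1 hg1 ravg hravg X Y hX hY VarX hVarX
end

section
/- With no channel knowledge at the transmitter and fixed-rate transmission λ(snr) = a·snr/log_e 2 for a parameter a > 0, the energy per bit of the ON–OFF discrete Markov source satisfies lim_{snr→0⁺} snr / r(snr) = 2·log_e 2 / (a·e^{−a}); moreover 2·log_e 2/(a·e^{−a}) ≥ 2e·log_e 2 for every a > 0 with equality if and only if a = 1, so the minimum energy per bit equals 2e·log_e 2 = e(γ+1)·log_e 2 with γ = 1 and is independent of θ, p11, p22. -/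
open Real Filter Set Topology

/-!
Because `2 ^ λ(snr) = e^{a·snr}`, the ON probability `P` tends to `e^{-a}/2`, so
`1 - g(snr) ~ P·θ·λ(snr) ~ θ·a·e^{-a}/(2 log 2)·snr`. The throughput is `(P_on/θ)·Φ(g)` for the
logarithm `Φ` of the Markov ratio, which has `Φ(1) = 0` and `Φ'(1) = -1/P_on`; hence
`r(snr)/snr → a·e^{-a}/(2 log 2)` and `θ`, `p11`, `p22` cancel. The bound is
`b·e^{-b} ≤ e^{-1}`, i.e. `b ≤ e^{b-1}`, strict for `b ≠ 1`.
-/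

lemma two_rpow_div_log_two (x : ℝ) : (2 : ℝ) ^ (x / log 2) = exp x := by
  rw [rpow_def_of_pos two_pos, mul_div_cancel₀ x (log_pos one_lt_two).ne']

lemma tendsto_exp_mul_sub_one_div (u : ℝ) :
    Tendsto (fun x => (exp (u * x) - 1) / x) (𝓝[≠] 0) (𝓝 u) := by
  have h : HasDerivAt (fun x => exp (u * x)) u 0 := by
    simpa using ((hasDerivAt_id (0 : ℝ)).const_mul u).exp
  exact h.tendsto_slope.congr fun x => by simp [slope_def_field]

lemma tendsto_one_sub_exp_neg_mul_div (k : ℝ) :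
    Tendsto (fun x => (1 - exp (-k * x)) / x) (𝓝[≠] 0) (𝓝 k) := by
  simpa only [← neg_div, neg_sub, neg_neg, neg_mul] using (tendsto_exp_mul_sub_one_div (-k)).neg

lemma tendsto_secrecy_outage_prob (a : ℝ) :
    Tendsto (fun s => exp (-((exp (a * s) - 1) / s)) / (exp (a * s) + 1)) (𝓝[≠] 0)
      (𝓝 (exp (-a) / 2)) := by
  have hnum := (continuous_exp.tendsto _).comp (tendsto_exp_mul_sub_one_div a).neg
  have hden : Tendsto (fun s => exp (a * s) + 1) (𝓝[≠] 0) (𝓝 2) :=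
    (((continuous_exp.comp (continuous_const_mul a)).add continuous_const).tendsto' 0 2
      (by norm_num)).mono_left nhdsWithin_le_nhds
  exact hnum.div hden two_ne_zero

lemma mul_exp_neg_lt_exp_neg_one {b : ℝ} (hb : b ≠ 1) : b * exp (-b) < exp (-1) := by
  have h : b < exp (b - 1) := by simpa using add_one_lt_exp (sub_ne_zero.2 hb)
  calc b * exp (-b) < exp (b - 1) * exp (-b) := by gcongr
    _ = exp (-1) := by rw [← exp_add]; ring_nf

lemma mul_exp_one_le_div_mul_exp_neg {b c : ℝ} (hb : 0 < b) (hc : 0 ≤ c) :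
    c * exp 1 ≤ c / (b * exp (-b)) := by
  rw [← div_inv_eq_mul, ← exp_neg]
  exact div_le_div_of_nonneg_left hc (by positivity) (mul_exp_neg_le_exp_neg_one b)

lemma div_mul_exp_neg_eq_mul_exp_one_iff {b c : ℝ} (hb : 0 < b) (hc : 0 < c) :
    c / (b * exp (-b)) = c * exp 1 ↔ b = 1 := by
  refine ⟨fun h => by_contra fun hb1 => ?_, fun h => by rw [h, one_mul, exp_neg, div_inv_eq_mul]⟩
  have := div_lt_div_of_pos_left hc (by positivity) (mul_exp_neg_lt_exp_neg_one hb1)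
  rw [exp_neg, div_inv_eq_mul, h] at this
  exact lt_irrefl _ this

lemma HasDerivAt.tendsto_sub_div {𝕜 α : Type*} [NontriviallyNormedField 𝕜] {l : Filter α}
    {f : 𝕜 → 𝕜} {f' x c : 𝕜} {u v : α → 𝕜} (hf : HasDerivAt f f' x)
    (hu : Tendsto u l (𝓝[≠] x)) (huv : Tendsto (fun s => (u s - x) / v s) l (𝓝 c)) :
    Tendsto (fun s => (f (u s) - f x) / v s) l (𝓝 (f' * c)) := by
  refine ((hf.tendsto_slope.comp hu).mul huv).congr' ?_
  filter_upwards [hu self_mem_nhdsWithin] with s hs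
  have : u s - x ≠ 0 := sub_ne_zero.2 hs
  simp only [Function.comp_apply, slope_def_field]
  field_simp

lemma tendsto_nhdsNE_of_tendsto_sub_div {𝕜 α : Type*} [NontriviallyNormedField 𝕜]
    {l : Filter α} {u v : α → 𝕜} {x c : 𝕜} (hv : Tendsto v l (𝓝 0)) (hv0 : ∀ᶠ s in l, v s ≠ 0)
    (hux : ∀ᶠ s in l, u s ≠ x) (h : Tendsto (fun s => (u s - x) / v s) l (𝓝 c)) :
    Tendsto u l (𝓝[≠] x) := by
  refine tendsto_nhdsWithin_iff.2 ⟨?_, hux⟩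
  have hlim := (tendsto_const_nhds (x := x)).add (h.mul hv)
  rw [mul_zero, add_zero] at hlim
  refine hlim.congr' (hv0.mono fun s hs => ?_)
  rw [div_mul_cancel₀ _ hs, add_sub_cancel]

lemma hasDerivAt_log_onOff_ratio {p11 p22 : ℝ} (hp11 : p11 ≠ 1) :
    HasDerivAt (fun x => log ((1 - p11 * x) / ((1 - p11 - p22) * x ^ 2 + p22 * x)))
      (-(2 - p11 - p22) / (1 - p11)) 1 := by
  have h1 : (1 : ℝ) - p11 ≠ 0 := sub_ne_zero.2 (Ne.symm hp11)
  have hnum : HasDerivAt (fun x : ℝ => 1 - p11 * x) (-p11) 1 := by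
    simpa using ((hasDerivAt_id (1 : ℝ)).const_mul p11).const_sub 1
  have hden : HasDerivAt (fun x : ℝ => (1 - p11 - p22) * x ^ 2 + p22 * x)
      (2 - p11 - p22 - p11) 1 := by
    have := ((hasDerivAt_pow 2 (1 : ℝ)).const_mul (1 - p11 - p22)).add
      ((hasDerivAt_id' (1 : ℝ)).const_mul p22)
    exact this.congr_deriv (by norm_num; ring)
  have hden1 : (1 - p11 - p22) * (1 : ℝ) ^ 2 + p22 * 1 = 1 - p11 := by ring
  refine ((hnum.div hden (by rwa [hden1])).log
    (by rw [Pi.div_apply, hden1, mul_one, div_self h1]; exact one_ne_zero)).congr_deriv ?_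
  rw [Pi.div_apply, hden1, mul_one, div_self h1]
  field_simp
  ring

lemma tendsto_onOff_throughput_div {α : Type*} {l : Filter α} {p11 p22 θ c : ℝ}
    (hp11 : p11 ≠ 1) (hp : 2 - p11 - p22 ≠ 0) (hθ : θ ≠ 0) {g v : α → ℝ}
    (hg : Tendsto g l (𝓝[≠] 1)) (hgv : Tendsto (fun s => (g s - 1) / v s) l (𝓝 c)) :
    Tendsto (fun s => (1 - p11) / (2 - p11 - p22) / θ *
        log ((1 - p11 * g s) / ((1 - p11 - p22) * g s ^ 2 + p22 * g s)) / v s) l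
      (𝓝 (-c / θ)) := by
  have h1 : (1 : ℝ) - p11 ≠ 0 := sub_ne_zero.2 (Ne.symm hp11)
  have hlog := ((hasDerivAt_log_onOff_ratio (p22 := p22) hp11).tendsto_sub_div hg hgv).const_mul
    ((1 - p11) / (2 - p11 - p22) / θ)
  convert hlog using 2 with s
  · norm_num [mul_div_assoc]
  · field_simp

/-- With no channel knowledge at the transmitter and fixed-rate
transmission `λ(snr) = a·snr/log 2` for a parameter `a > 0`, the energy per bit of the
ON–OFF discrete Markov source satisfies
`lim_{snr→0⁺} snr / r(snr) = 2·log 2 / (a·e^{−a})`; moreover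
`2·log 2/(b·e^{−b}) ≥ 2e·log 2` for every `b > 0` with equality iff `b = 1`, so the
minimum energy per bit equals `2e·log 2 = e(γ+1)·log 2` with `γ = 1` and is independent
of `θ`, `p11`, `p22`. -/
theorem no_CSI_min_energy_per_bit_discrete_markov
    (θ a p11 p22 : ℝ) (hθ : 0 < θ) (ha : 0 < a)
    (hp11 : p11 ∈ Set.Ioo (0 : ℝ) 1) (hp22 : p22 ∈ Set.Ioo (0 : ℝ) 1)
    (Pon : ℝ) (hPon : Pon = (1 - p11) / (2 - p11 - p22))
    (lam : ℝ → ℝ) (hlam : ∀ snr, lam snr = a * snr / Real.log 2)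
    (P : ℝ → ℝ)
    (hP : ∀ snr, P snr =
      Real.exp (-(((2 : ℝ) ^ lam snr - 1) / snr)) / ((2 : ℝ) ^ lam snr + 1))
    (g : ℝ → ℝ)
    (hg : ∀ snr, g snr = 1 - P snr * (1 - Real.exp (-θ * lam snr)))
    (r : ℝ → ℝ)
    (hr : ∀ snr, r snr = (Pon / θ) * Real.log
      ((1 - p11 * g snr) / ((1 - p11 - p22) * (g snr) ^ 2 + p22 * g snr))) :
    Filter.Tendsto (fun snr => snr / r snr) (nhdsWithin 0 (Set.Ioi 0))
      (nhds (2 * Real.log 2 / (a * Real.exp (-a)))) ∧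
    (∀ b : ℝ, 0 < b →
      2 * Real.exp 1 * Real.log 2 ≤ 2 * Real.log 2 / (b * Real.exp (-b)) ∧
      (2 * Real.log 2 / (b * Real.exp (-b)) = 2 * Real.exp 1 * Real.log 2 ↔ b = 1)) ∧
    2 * Real.exp 1 * Real.log 2 = Real.exp 1 * ((1 : ℝ) + 1) * Real.log 2 := by
  have hright : 𝓝[>] (0 : ℝ) ≤ 𝓝[≠] 0 := nhdsGT_le_nhdsNE 0
  have hlam' : ∀ s, -θ * lam s = -(θ * (a / log 2)) * s := fun s => by rw [hlam]; ring
  have hP_lim : Tendsto P (𝓝[>] 0) (𝓝 (exp (-a) / 2)) :=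
    ((tendsto_secrecy_outage_prob a).mono_left hright).congr fun s => by
      rw [hP, hlam, two_rpow_div_log_two]
  have hg_slope : Tendsto (fun s => (g s - 1) / s) (𝓝[>] 0)
      (𝓝 (-(exp (-a) / 2 * (θ * (a / log 2))))) :=
    (hP_lim.mul ((tendsto_one_sub_exp_neg_mul_div _).mono_left hright)).neg.congr fun s => by
      rw [hg, hlam']; ring
  have hg_lt : ∀ s > 0, g s < 1 := fun s hs => by
    have hP_pos : 0 < P s := by rw [hP]; positivity
    have hexp_lt : exp (-θ * lam s) < 1 := by
      rw [exp_lt_one_iff, hlam', neg_mul, neg_lt_zero]; positivity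
    rw [hg, sub_lt_self_iff]
    exact mul_pos hP_pos (sub_pos.2 hexp_lt)
  have hg_lim : Tendsto g (𝓝[>] 0) (𝓝[≠] 1) :=
    tendsto_nhdsNE_of_tendsto_sub_div (tendsto_nhdsWithin_of_tendsto_nhds tendsto_id)
      (eventually_nhdsWithin_of_forall fun s hs => ne_of_gt hs)
      (eventually_nhdsWithin_of_forall fun s hs => (hg_lt s hs).ne) hg_slope
  have hr_div := tendsto_onOff_throughput_div (p22 := p22) hp11.2.ne
    (by linarith [hp11.2, hp22.2]) hθ.ne' hg_lim hg_slope
  simp only [← hPon, ← hr] at hr_div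
  refine ⟨?_, fun b hb => ?_, by ring⟩
  · convert hr_div.inv₀ (by rw [neg_neg]; positivity) using 2 with s
    · exact (inv_div _ _).symm
    · field_simp
  · rw [mul_right_comm]
    exact ⟨mul_exp_one_le_div_mul_exp_neg hb (by positivity),
      div_mul_exp_neg_eq_mul_exp_one_iff hb (by positivity)⟩
end
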